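/- arXiv:1312.2027 — 3 statements merged into one kernel-verified Lean document; each statement's English description precedes it below -/
import Mathlib

section
/- Let α_n = Σ 2^{dd(π)} over all permutations of [n] with no double ascents. Then for n ≥ 3, α_n = n · α_{n−1} + 1 + (−1)^n. -/
open Finset
open scoped Classical

/-- π has an ascent at position i (0-indexed): π_i < π_{i+1}. -/
def Asc {n : ℕ} (π : Equiv.Perm (Fin n)) (i : ℕ) : Prop :=
  ∃ h : i + 1 < n, π ⟨i, Nat.lt_of_succ_lt h⟩ < π ⟨i + 1, h⟩

/-- π has a descent at position i (0-indexed): π_i > π_{i+1}. -/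
def Desc {n : ℕ} (π : Equiv.Perm (Fin n)) (i : ℕ) : Prop :=
  ∃ h : i + 1 < n, π ⟨i + 1, h⟩ < π ⟨i, Nat.lt_of_succ_lt h⟩

/-- The number of double descents of π: positions i with π_i > π_{i+1} > π_{i+2}. -/
noncomputable def dd {n : ℕ} (π : Equiv.Perm (Fin n)) : ℕ :=
  ((Finset.range n).filter (fun i => Desc π i ∧ Desc π (i + 1))).card

/-- π has no double ascents: no i with π_i < π_{i+1} < π_{i+2}. -/
def NoDoubleAsc {n : ℕ} (π : Equiv.Perm (Fin n)) : Prop :=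
  ∀ i : ℕ, ¬ (Asc π i ∧ Asc π (i + 1))

/-- α_n = Σ 2^{dd(π)} over all permutations of [n] with no double ascents. -/
noncomputable def alpha (n : ℕ) : ℕ :=
  ∑ π ∈ Finset.univ.filter (fun π : Equiv.Perm (Fin n) => NoDoubleAsc π), 2 ^ dd π

open Nat


/-- `Bc m = m! - numDerangements m` : number of permutations with a fixed point. -/
def Bc (m : ℕ) : ℕ := Nat.factorial m - numDerangements m

/-- hockey stick, range version -/
lemma hockey (N s : ℕ) : ∑ t ∈ range N, t.choose s = N.choose (s+1) := by
  induction N with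
  | zero => simp
  | succ N ih => rw [Finset.sum_range_succ, ih, Nat.choose_succ_succ' N s]; omega

/-- Pascal-type step for the derangement-binomial sum. -/
lemma Esum_succ (n : ℕ) :
    ∑ m ∈ range (n+2), (n+1).choose m * numDerangements m
      = (∑ m ∈ range (n+1), n.choose m * numDerangements m)
        + ∑ t ∈ range (n+1), n.choose t * numDerangements (t+1) := by
  rw [Finset.sum_range_succ' (fun m => (n+1).choose m * numDerangements m) (n+1)]
  rw [Finset.sum_range_succ' (fun m => n.choose m * numDerangements m) n]
  have h1 : ∀ i, (n+1).choose (i+1) * numDerangements (i+1)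
      = n.choose i * numDerangements (i+1) + n.choose (i+1) * numDerangements (i+1) := by
    intro i; rw [Nat.choose_succ_succ n i, Nat.add_mul]
  rw [Finset.sum_congr rfl (fun i _ => h1 i), Finset.sum_add_distrib]
  have h2 : ∑ i ∈ range (n+1), n.choose (i+1) * numDerangements (i+1)
      = ∑ i ∈ range n, n.choose (i+1) * numDerangements (i+1) := by
    rw [Finset.sum_range_succ, Nat.choose_succ_self, zero_mul, add_zero]
  simp only [Nat.choose_zero_right, one_mul]
  omega

/-- The key derangement identity `∑ C(n,m) d_m = n!`. -/
lemma Dsum : ∀ n : ℕ, ∑ m ∈ range (n+1), n.choose m * numDerangements m = n ! := by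
  have key : ∀ n : ℕ, (∀ k ≤ n, ∑ m ∈ range (k+1), k.choose m * numDerangements m = k !) := by
    intro n
    induction n with
    | zero => intro k hk; interval_cases k <;> simp [numDerangements_zero]
    | succ n ih =>
      intro k hk
      rcases Nat.lt_or_ge k (n+1) with h | h
      · exact ih k (by omega)
      have hk' : k = n + 1 := by omega
      subst hk'
      rcases Nat.eq_zero_or_pos n with h0 | hpos
      · subst h0; simp [Finset.sum_range_succ, numDerangements_zero, numDerangements_one]
      obtain ⟨p, rfl⟩ : ∃ p, n = p + 1 := ⟨n - 1, by omega⟩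
      have En : ∑ m ∈ range (p+2), (p+1).choose m * numDerangements m = (p+1)! := ih (p+1) (by omega)
      have Ep : ∑ m ∈ range (p+1), p.choose m * numDerangements m = p ! := ih p (by omega)
      -- the inner sum S' at level p, in ℤ:
      have Sp : (∑ i ∈ range (p+1), (p.choose i : ℤ) * numDerangements (i+1))
          = ((p+1)! : ℤ) - (p ! : ℤ) := by
        have h' : (∑ m ∈ range (p+1), p.choose m * numDerangements m)
              + (∑ t ∈ range (p+1), p.choose t * numDerangements (t+1)) = (p+1)! := by
          rw [← En]; exact (Esum_succ p).symm
        have h'' := congrArg (Nat.cast : ℕ → ℤ) h'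
        push_cast at h''
        have EpZ := congrArg (Nat.cast : ℕ → ℤ) Ep
        push_cast at EpZ
        linarith [h'', EpZ]
      -- Σ C(p+1,t)·t·d t  in ℤ
      have hA : (∑ t ∈ range (p+2), ((p+1).choose t : ℤ) * t * numDerangements t)
          = (p+1) * (((p+1)! : ℤ) - (p ! : ℤ)) := by
        rw [Finset.sum_range_succ' (fun t => ((p+1).choose t : ℤ) * t * numDerangements t) (p+1)]
        have e2 : ∀ i ∈ range (p+1), ((p+1).choose (i+1) : ℤ) * ((i+1 : ℕ) : ℤ) * numDerangements (i+1)
            = (p+1) * ((p.choose i : ℤ) * numDerangements (i+1)) := by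
          intro i _
          have hc : ((p+1) * p.choose i : ℕ) = ((p+1).choose (i+1) * (i+1) : ℕ) :=
            Nat.add_one_mul_choose_eq p i
          have hc' : ((p+1) * p.choose i : ℤ) = ((p+1).choose (i+1) : ℤ) * ((i+1 : ℕ) : ℤ) := by
            exact_mod_cast congrArg (Nat.cast : ℕ → ℤ) hc
          calc ((p+1).choose (i+1) : ℤ) * ((i+1 : ℕ) : ℤ) * numDerangements (i+1)
              = (((p+1).choose (i+1) : ℤ) * ((i+1 : ℕ) : ℤ)) * numDerangements (i+1) := by ring
            _ = ((p+1) * p.choose i : ℤ) * numDerangements (i+1) := by rw [← hc']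
            _ = (p+1) * ((p.choose i : ℤ) * numDerangements (i+1)) := by push_cast; ring
        rw [Finset.sum_congr rfl e2, ← Finset.mul_sum, Sp]
        push_cast
        ring
      -- Σ C(p+1,t)·d t in ℤ
      have hB : (∑ t ∈ range (p+2), ((p+1).choose t : ℤ) * numDerangements t) = ((p+1)! : ℤ) := by
        have := congrArg (Nat.cast : ℕ → ℤ) En
        push_cast at this
        exact this
      -- alternating sum
      have hC : (∑ t ∈ range (p+2), (-1 : ℤ)^t * ((p+1).choose t : ℤ)) = 0 := by
        have := Int.alternating_sum_range_choose (n := p+1)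
        simpa using this
      -- the inner sum at level p+1, in ℤ
      have hS : (∑ t ∈ range (p+2), ((p+1).choose t : ℤ) * numDerangements (t+1))
          = (p+2) * ((p+1)! : ℤ) - ((p+1)! : ℤ) := by
        have e1 : ∀ t ∈ range (p+2), ((p+1).choose t : ℤ) * numDerangements (t+1)
            = (((p+1).choose t : ℤ) * t * numDerangements t + ((p+1).choose t : ℤ) * numDerangements t)
              - (-1 : ℤ)^t * ((p+1).choose t : ℤ) := by
          intro t _
          have : (numDerangements (t+1) : ℤ) = (t+1) * numDerangements t - (-1)^t := numDerangements_succ t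
          rw [mul_comm (((p+1).choose t : ℤ)) (numDerangements (t+1) : ℤ)] at *
          rw [this]; ring
        rw [Finset.sum_congr rfl e1, Finset.sum_sub_distrib, Finset.sum_add_distrib, hA, hB, hC]
        have hf : ((p+1)! : ℤ) = ((p:ℤ)+1) * (p ! : ℤ) := by
          rw [Nat.factorial_succ]; push_cast; ring
        push_cast
        linarith [hf]
      -- conclude
      rw [Esum_succ (p+1), En]
      have hZ : (((p+1)! : ℕ) : ℤ) + ((∑ t ∈ range (p+2), (p+1).choose t * numDerangements (t+1) : ℕ) : ℤ)
          = (((p+2)! : ℕ) : ℤ) := by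
        push_cast
        rw [hS]
        rw [Nat.factorial_succ (p+1)]
        push_cast
        ring
      exact_mod_cast hZ
  exact fun n => key n n (le_refl n)

lemma numDerangements_le_factorial (m : ℕ) : numDerangements m ≤ m ! := by
  have h := Dsum m
  have : m.choose m * numDerangements m ≤ ∑ k ∈ range (m+1), m.choose k * numDerangements k :=
    Finset.single_le_sum (f := fun k => m.choose k * numDerangements k)
      (fun i _ => Nat.zero_le _) (self_mem_range_succ m)
  simpa [Nat.choose_self, h] using this

lemma Bc_cast (m : ℕ) : (Bc m : ℤ) = (m ! : ℤ) - numDerangements m := by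
  rw [Bc, Nat.cast_sub (numDerangements_le_factorial m)]

lemma Bc_zero : Bc 0 = 0 := by simp [Bc, numDerangements_zero]
lemma Bc_one : Bc 1 = 1 := by simp [Bc, numDerangements_one]


/-- telescoping factorial sum -/
lemma S3m (n : ℕ) :
    (∑ m ∈ range (n+1), ((n+1).choose m : ℤ) * ((n - m : ℕ) : ℤ) * (m ! : ℤ))
      = ((n+1)! : ℤ) - 1 := by
  have e : ∀ m ∈ range (n+1), ((n+1).choose m : ℤ) * ((n - m : ℕ) : ℤ) * (m ! : ℤ)
      = ((n+1).descFactorial (m+1) : ℤ) - ((n+1).descFactorial m : ℤ) := by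
    intro m hm
    have hm' : m ≤ n := by simpa using Nat.lt_succ_iff.mp (Finset.mem_range.mp hm)
    obtain ⟨q, rfl⟩ : ∃ q, n = m + q := ⟨n - m, by omega⟩
    have h1 : (m+q+1).descFactorial (m+1) = (q+1) * (m+q+1).descFactorial m := by
      have := Nat.descFactorial_succ (m+q+1) m
      have h' : m + q + 1 - m = q + 1 := by omega
      rw [h'] at this
      exact this
    have h2 : (m+q+1).descFactorial m = m ! * (m+q+1).choose m :=
      Nat.descFactorial_eq_factorial_mul_choose _ m
    have h3 : m + q - m = q := by omega
    rw [h1, h2, h3]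
    push_cast
    ring
  rw [Finset.sum_congr rfl e, Finset.sum_range_sub (fun m => ((n+1).descFactorial m : ℤ))]
  rw [Nat.descFactorial_self, Nat.descFactorial_zero]
  push_cast
  ring

/-- derangement convolution -/
lemma S2m (n : ℕ) :
    (∑ m ∈ range (n+1), ((n+1).choose m : ℤ) * ((n - m : ℕ) : ℤ) * (numDerangements m : ℤ))
      = (numDerangements (n+1) : ℤ) := by
  have split : ∀ m ∈ range (n+1),
      ((n+1).choose m : ℤ) * ((n - m : ℕ) : ℤ) * (numDerangements m : ℤ)
      = ((n+1) : ℤ) * ((n.choose m : ℤ) * (numDerangements m : ℤ))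
        - ((n+1).choose m : ℤ) * (numDerangements m : ℤ) := by
    intro m hm
    have hm' : m ≤ n := by simpa using Nat.lt_succ_iff.mp (Finset.mem_range.mp hm)
    have hc1 : (n+1).choose m * (n+1-m) = (n+1).choose (m+1) * (m+1) := by
      have := Nat.choose_succ_right_eq (n+1) m
      omega
    have hc2 : (n+1) * n.choose m = (n+1).choose (m+1) * (m+1) := Nat.add_one_mul_choose_eq n m
    have key : (n+1).choose m * (n - m) + (n+1).choose m = (n+1) * n.choose m := by
      have h' : n + 1 - m = (n - m) + 1 := by omega
      rw [h'] at hc1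
      have := hc1
      nlinarith [this, hc2]
    have hz := congrArg (Nat.cast : ℕ → ℤ) key
    push_cast at hz
    linear_combination hz * (numDerangements m : ℤ)
  rw [Finset.sum_congr rfl split, Finset.sum_sub_distrib, ← Finset.mul_sum]
  have h1 : (∑ m ∈ range (n+1), (n.choose m : ℤ) * (numDerangements m : ℤ)) = (n ! : ℤ) := by
    have := congrArg (Nat.cast : ℕ → ℤ) (Dsum n)
    push_cast at this
    exact this
  have h2 : (∑ m ∈ range (n+1), ((n+1).choose m : ℤ) * (numDerangements m : ℤ))
      = ((n+1)! : ℤ) - (numDerangements (n+1) : ℤ) := by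
    have := congrArg (Nat.cast : ℕ → ℤ) (Dsum (n+1))
    rw [Finset.sum_range_succ] at this
    push_cast at this
    simp only [Nat.choose_self, Nat.cast_one, one_mul] at this
    linarith [this]
  rw [h1, h2]
  have hf : ((n+1)! : ℤ) = ((n:ℤ)+1) * (n ! : ℤ) := by
    rw [Nat.factorial_succ]; push_cast; ring
  linarith [hf]

/-- The convolution identity for `Bc`. -/
lemma conv (n : ℕ) :
    Bc (n+1) = (∑ s ∈ range (n+1), (n+1).choose (s+1) * s * Bc (n-s)) + 1 := by
  have refl1 : (∑ s ∈ range (n+1), (n+1).choose (s+1) * s * Bc (n-s))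
      = ∑ m ∈ range (n+1), (n+1).choose m * (n - m) * Bc m := by
    rw [← Finset.sum_range_reflect (fun s => (n+1).choose (s+1) * s * Bc (n-s)) (n+1)]
    apply Finset.sum_congr rfl
    intro m hm
    have hm' : m ≤ n := by simpa using Nat.lt_succ_iff.mp (Finset.mem_range.mp hm)
    have h1 : n + 1 - 1 - m = n - m := by omega
    have h2 : n - (n - m) = m := by omega
    have h3 : (n+1) - m = (n - m) + 1 := by omega
    have h4 : (n+1).choose ((n-m)+1) = (n+1).choose m := by
      rw [← h3, Nat.choose_symm (by omega : m ≤ n+1)]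
    rw [h1, h4, h2]
  rw [refl1]
  have main : (∑ m ∈ range (n+1), ((n+1).choose m : ℤ) * ((n - m : ℕ) : ℤ) * (Bc m : ℤ))
      = (Bc (n+1) : ℤ) - 1 := by
    have e : ∀ m ∈ range (n+1), ((n+1).choose m : ℤ) * ((n - m : ℕ) : ℤ) * (Bc m : ℤ)
        = (((n+1).choose m : ℤ) * ((n - m : ℕ) : ℤ) * (m ! : ℤ))
          - (((n+1).choose m : ℤ) * ((n - m : ℕ) : ℤ) * (numDerangements m : ℤ)) := by
      intro m hm
      rw [Bc_cast]
      ring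
    rw [Finset.sum_congr rfl e, Finset.sum_sub_distrib, S3m, S2m, Bc_cast]
    ring
  have final : ((∑ m ∈ range (n+1), (n+1).choose m * (n - m) * Bc m : ℕ) : ℤ) + 1
      = (Bc (n+1) : ℤ) := by
    push_cast
    rw [main]
    ring
  exact_mod_cast final.symm


/-- partial derangement-sum -/
lemma Dsum_partial (k : ℕ) :
    (∑ m ∈ range (k+1), ((k+1).choose m : ℤ) * (numDerangements m : ℤ))
      = ((k+1)! : ℤ) - (numDerangements (k+1) : ℤ) := by
  have := congrArg (Nat.cast : ℕ → ℤ) (Dsum (k+1))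
  rw [Finset.sum_range_succ] at this
  push_cast at this
  simp only [Nat.choose_self, Nat.cast_one, one_mul] at this
  linarith [this]

/-- the final recursion in `Bc`-sum form -/
lemma final_alg (j : ℕ) :
    ((∑ m ∈ range (j+2), (j+2).choose m * Bc m : ℕ) : ℤ)
      = (j+2) * ((∑ m ∈ range (j+1), (j+1).choose m * Bc m : ℕ) : ℤ) + 1 + (-1)^(j+2) := by
  -- factorial parts via descFactorial
  have df : ∀ N m : ℕ, (N.choose m * m ! : ℕ) = N.descFactorial m := by
    intro N m
    rw [Nat.descFactorial_eq_factorial_mul_choose, Nat.mul_comm]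
  have fact1 : (∑ m ∈ range (j+2), (j+2).choose m * m !)
      = 1 + (j+2) * ∑ i ∈ range (j+1), (j+1).choose i * i ! := by
    calc (∑ m ∈ range (j+2), (j+2).choose m * m !)
        = ∑ m ∈ range (j+2), (j+2).descFactorial m := Finset.sum_congr rfl (fun m _ => df _ m)
      _ = (∑ i ∈ range (j+1), (j+2).descFactorial (i+1)) + (j+2).descFactorial 0 :=
          Finset.sum_range_succ' _ (j+1)
      _ = (∑ i ∈ range (j+1), (j+2) * (j+1).descFactorial i) + 1 := by
          rw [Nat.descFactorial_zero]
          congr 1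
          exact Finset.sum_congr rfl (fun i _ => Nat.succ_descFactorial_succ (j+1) i)
      _ = 1 + (j+2) * ∑ i ∈ range (j+1), (j+1).descFactorial i := by
          rw [← Finset.mul_sum]; omega
      _ = 1 + (j+2) * ∑ i ∈ range (j+1), (j+1).choose i * i ! := by
          congr 1
          rw [Finset.mul_sum, Finset.mul_sum]
          exact Finset.sum_congr rfl (fun i _ => by rw [df])
  -- split Bc
  have splitsum : ∀ N : ℕ, ((∑ m ∈ range (N+1), (N+1).choose m * Bc m : ℕ) : ℤ)
      = (∑ m ∈ range (N+1), ((N+1).choose m : ℤ) * (m ! : ℤ))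
        - ∑ m ∈ range (N+1), ((N+1).choose m : ℤ) * (numDerangements m : ℤ) := by
    intro N
    push_cast
    rw [← Finset.sum_sub_distrib]
    exact Finset.sum_congr rfl (fun m _ => by rw [Bc_cast]; ring)
  rw [splitsum (j+1), splitsum j]
  rw [Dsum_partial (j+1), Dsum_partial j]
  have fact1' := congrArg (Nat.cast : ℕ → ℤ) fact1
  push_cast at fact1'
  rw [fact1']
  have hd : (numDerangements (j+2) : ℤ) = ((j:ℤ)+2) * (numDerangements (j+1) : ℤ) - (-1)^(j+1) :=
    numDerangements_succ (j+1)
  have hf : ((j+2)! : ℤ) = ((j:ℤ)+2) * ((j+1)! : ℤ) := by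
    rw [Nat.factorial_succ (j+1)]; push_cast; ring
  have hsign : ((-1:ℤ))^(j+2) = -((-1:ℤ))^(j+1) := by
    rw [pow_succ]; ring
  rw [hd, hf, hsign]
  ring







----------------------------------------------------------------

/-- insert the maximum value `v`-high at the last position:
`ins τ v` sends `castSucc i ↦ v.succAbove (τ i)` and `last ↦ v`. -/
def ins {n : ℕ} (τ : Equiv.Perm (Fin (n+1))) (v : Fin (n+2)) : Equiv.Perm (Fin (n+2)) :=
  (finSuccEquivLast.trans ((Equiv.optionCongr τ).trans (finSuccEquiv' v).symm))

lemma ins_castSucc {n : ℕ} (τ : Equiv.Perm (Fin (n+1))) (v : Fin (n+2)) (i : Fin (n+1)) :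
    ins τ v (Fin.castSucc i) = v.succAbove (τ i) := by
  simp [ins, finSuccEquivLast_castSucc, finSuccEquiv'_symm_some]

lemma ins_last {n : ℕ} (τ : Equiv.Perm (Fin (n+1))) (v : Fin (n+2)) :
    ins τ v (Fin.last (n+1)) = v := by
  simp [ins, finSuccEquivLast_last, finSuccEquiv'_symm_none]

lemma ins_bijective {n : ℕ} :
    Function.Bijective (fun p : Equiv.Perm (Fin (n+1)) × Fin (n+2) => ins p.1 p.2) := by
  rw [Fintype.bijective_iff_injective_and_card]
  constructor
  · rintro ⟨τ, v⟩ ⟨τ', v'⟩ h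
    simp only at h
    have hv : v = v' := by
      have := congrArg (fun π : Equiv.Perm (Fin (n+2)) => π (Fin.last (n+1))) h
      simpa [ins_last] using this
    subst hv
    have hτ : τ = τ' := by
      apply Equiv.ext
      intro i
      have := congrArg (fun π : Equiv.Perm (Fin (n+2)) => π (Fin.castSucc i)) h
      simp only [ins_castSucc] at this
      exact Fin.succAbove_right_injective this
    rw [hτ]
  · simp [Fintype.card_prod, Fintype.card_perm, Fintype.card_fin, Nat.factorial_succ]
    ring

lemma asc_out {m : ℕ} (π : Equiv.Perm (Fin m)) {i : ℕ} (h : ¬ (i + 1 < m)) : ¬ Asc π i :=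
  fun ⟨h', _⟩ => h h'

lemma desc_out {m : ℕ} (π : Equiv.Perm (Fin m)) {i : ℕ} (h : ¬ (i + 1 < m)) : ¬ Desc π i :=
  fun ⟨h', _⟩ => h h'

lemma asc_ins_lt {n : ℕ} (τ : Equiv.Perm (Fin (n+1))) (v : Fin (n+2)) {i : ℕ}
    (h : i + 1 < n + 1) : (Asc (ins τ v) i ↔ Asc τ i) := by
  have h2 : i + 1 < n + 2 := by omega
  have e1 : (⟨i, Nat.lt_of_succ_lt h2⟩ : Fin (n+2)) = Fin.castSucc ⟨i, Nat.lt_of_succ_lt h⟩ := rfl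
  have e2 : (⟨i+1, h2⟩ : Fin (n+2)) = Fin.castSucc ⟨i+1, h⟩ := rfl
  constructor
  · rintro ⟨h', hlt⟩
    refine ⟨h, ?_⟩
    rw [e1, e2, ins_castSucc, ins_castSucc] at hlt
    exact Fin.succAbove_lt_succAbove_iff.mp hlt
  · rintro ⟨h', hlt⟩
    refine ⟨h2, ?_⟩
    rw [e1, e2, ins_castSucc, ins_castSucc]
    exact Fin.succAbove_lt_succAbove_iff.mpr hlt

lemma desc_ins_lt {n : ℕ} (τ : Equiv.Perm (Fin (n+1))) (v : Fin (n+2)) {i : ℕ}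
    (h : i + 1 < n + 1) : (Desc (ins τ v) i ↔ Desc τ i) := by
  have h2 : i + 1 < n + 2 := by omega
  have e1 : (⟨i, Nat.lt_of_succ_lt h2⟩ : Fin (n+2)) = Fin.castSucc ⟨i, Nat.lt_of_succ_lt h⟩ := rfl
  have e2 : (⟨i+1, h2⟩ : Fin (n+2)) = Fin.castSucc ⟨i+1, h⟩ := rfl
  constructor
  · rintro ⟨h', hlt⟩
    refine ⟨h, ?_⟩
    rw [e1, e2, ins_castSucc, ins_castSucc] at hlt
    exact Fin.succAbove_lt_succAbove_iff.mp hlt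
  · rintro ⟨h', hlt⟩
    refine ⟨h2, ?_⟩
    rw [e1, e2, ins_castSucc, ins_castSucc]
    exact Fin.succAbove_lt_succAbove_iff.mpr hlt

lemma asc_ins_last {n : ℕ} (τ : Equiv.Perm (Fin (n+1))) (v : Fin (n+2)) :
    (Asc (ins τ v) n ↔ Fin.castSucc (τ (Fin.last n)) < v) := by
  have h2 : n + 1 < n + 2 := by omega
  have e1 : (⟨n, Nat.lt_of_succ_lt h2⟩ : Fin (n+2)) = Fin.castSucc (Fin.last n) := rfl
  have e2 : (⟨n+1, h2⟩ : Fin (n+2)) = Fin.last (n+1) := rfl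
  constructor
  · rintro ⟨h', hlt⟩
    rw [e1, e2, ins_castSucc, ins_last] at hlt
    exact (Fin.succAbove_lt_iff_castSucc_lt v (τ (Fin.last n))).mp hlt
  · intro hlt
    refine ⟨h2, ?_⟩
    rw [e1, e2, ins_castSucc, ins_last]
    exact (Fin.succAbove_lt_iff_castSucc_lt v (τ (Fin.last n))).mpr hlt

lemma desc_ins_last {n : ℕ} (τ : Equiv.Perm (Fin (n+1))) (v : Fin (n+2)) :
    (Desc (ins τ v) n ↔ v ≤ Fin.castSucc (τ (Fin.last n))) := by
  have h2 : n + 1 < n + 2 := by omega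
  have e1 : (⟨n, Nat.lt_of_succ_lt h2⟩ : Fin (n+2)) = Fin.castSucc (Fin.last n) := rfl
  have e2 : (⟨n+1, h2⟩ : Fin (n+2)) = Fin.last (n+1) := rfl
  constructor
  · rintro ⟨h', hlt⟩
    rw [e1, e2, ins_castSucc, ins_last] at hlt
    exact (Fin.lt_succAbove_iff_le_castSucc v (τ (Fin.last n))).mp hlt
  · intro hlt
    refine ⟨h2, ?_⟩
    rw [e1, e2, ins_castSucc, ins_last]
    exact (Fin.lt_succAbove_iff_le_castSucc v (τ (Fin.last n))).mpr hlt

/-- at a genuine index, not-ascent is descent -/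
lemma not_asc_iff_desc {m : ℕ} (π : Equiv.Perm (Fin m)) {i : ℕ} (h : i + 1 < m) :
    (¬ Asc π i ↔ Desc π i) := by
  constructor
  · intro hna
    refine ⟨h, ?_⟩
    rcases lt_trichotomy (π ⟨i+1, h⟩) (π ⟨i, Nat.lt_of_succ_lt h⟩) with hlt | heq | hgt
    · exact hlt
    · exfalso
      have := π.injective heq
      simp [Fin.ext_iff] at this
    · exact absurd ⟨h, hgt⟩ hna
  · rintro ⟨h', hlt⟩ ⟨h'', hlt'⟩
    exact absurd (hlt.trans hlt') (lt_irrefl _)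



----------------------------------------------------------------

lemma noaa_ins {p : ℕ} (τ : Equiv.Perm (Fin (p+2))) (v : Fin (p+3)) :
    NoDoubleAsc (ins τ v) ↔
      NoDoubleAsc τ ∧ ¬ (Asc τ p ∧ Fin.castSucc (τ (Fin.last (p+1))) < v) := by
  constructor
  · intro H
    refine ⟨?_, ?_⟩
    · rintro i ⟨a1, ⟨hb, hx⟩⟩
      exact H i ⟨(asc_ins_lt τ v (by omega)).mpr a1, (asc_ins_lt τ v (by omega)).mpr ⟨hb, hx⟩⟩
    · rintro ⟨hasc, hlt⟩
      exact H p ⟨(asc_ins_lt τ v (by omega)).mpr hasc, (asc_ins_last τ v).mpr hlt⟩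
  · rintro ⟨Hτ, Hl⟩ i ⟨a1, ⟨hb, hx⟩⟩
    rcases Nat.lt_or_ge i p with hip | hip
    · exact Hτ i ⟨(asc_ins_lt τ v (by omega)).mp a1, (asc_ins_lt τ v (by omega)).mp ⟨hb, hx⟩⟩
    · rcases Nat.eq_or_lt_of_le hip with hip' | hip'
      · subst hip'
        exact Hl ⟨(asc_ins_lt τ v (by omega)).mp a1, (asc_ins_last τ v).mp ⟨hb, hx⟩⟩
      · exact asc_out (ins τ v) (by omega) ⟨hb, hx⟩

lemma dd_ins {p : ℕ} (τ : Equiv.Perm (Fin (p+2))) (v : Fin (p+3)) :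
    dd (ins τ v)
      = dd τ + (if Desc τ p ∧ v ≤ Fin.castSucc (τ (Fin.last (p+1))) then 1 else 0) := by
  have hπ : dd (ins τ v)
      = ∑ i ∈ range (p+3), (if Desc (ins τ v) i ∧ Desc (ins τ v) (i+1) then 1 else 0) := by
    rw [dd, Finset.card_filter]
  have hτ : dd τ = ∑ i ∈ range (p+2), (if Desc τ i ∧ Desc τ (i+1) then 1 else 0) := by
    rw [dd, Finset.card_filter]
  rw [hπ, hτ]
  rw [Finset.sum_range_succ, Finset.sum_range_succ, Finset.sum_range_succ]  -- peel i=p+2,p+1,p from π-sum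
  rw [Finset.sum_range_succ, Finset.sum_range_succ]  -- peel i=p+1,p from τ-sum
  have z1 : (if Desc (ins τ v) (p+2) ∧ Desc (ins τ v) (p+2+1) then 1 else 0) = 0 := by
    rw [if_neg]; rintro ⟨⟨hb, _⟩, _⟩; omega
  have z2 : (if Desc (ins τ v) (p+1) ∧ Desc (ins τ v) (p+1+1) then 1 else 0) = 0 := by
    rw [if_neg]; rintro ⟨_, ⟨hb, _⟩⟩; omega
  have z3 : (if Desc τ (p+1) ∧ Desc τ (p+1+1) then 1 else 0) = 0 := by
    rw [if_neg]; rintro ⟨⟨hb, _⟩, _⟩; omega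
  have z4 : (if Desc τ p ∧ Desc τ (p+1) then 1 else 0) = 0 := by
    rw [if_neg]; rintro ⟨_, ⟨hb, _⟩⟩; omega
  rw [z1, z2, z3, z4]
  have main : ∀ i ∈ range p, (if Desc (ins τ v) i ∧ Desc (ins τ v) (i+1) then 1 else 0)
      = (if Desc τ i ∧ Desc τ (i+1) then 1 else 0) := by
    intro i hi
    have hi' : i < p := Finset.mem_range.mp hi
    rw [if_congr (and_congr (desc_ins_lt τ v (by omega)) (desc_ins_lt τ v (by omega))) rfl rfl]
  rw [Finset.sum_congr rfl main]
  have last : (if Desc (ins τ v) p ∧ Desc (ins τ v) (p+1) then 1 else 0)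
      = (if Desc τ p ∧ v ≤ Fin.castSucc (τ (Fin.last (p+1))) then 1 else 0) := by
    rw [if_congr (and_congr (desc_ins_lt τ v (by omega)) (desc_ins_last τ v)) rfl rfl]
  rw [last]
  omega

lemma pow_dd_ins {p : ℕ} (τ : Equiv.Perm (Fin (p+2))) (v : Fin (p+3)) :
    2 ^ dd (ins τ v)
      = 2 ^ dd τ * (if Desc τ p ∧ v ≤ Fin.castSucc (τ (Fin.last (p+1))) then 2 else 1) := by
  rw [dd_ins]
  by_cases h : Desc τ p ∧ v ≤ Fin.castSucc (τ (Fin.last (p+1)))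
  · rw [if_pos h, if_pos h, pow_succ]
  · rw [if_neg h, if_neg h, add_zero, mul_one]



/-- sum over no-double-ascent permutations with prescribed last value -/
noncomputable def Rst (n : ℕ) (j : Fin (n+1)) : ℕ :=
  ∑ σ ∈ Finset.univ.filter
    (fun σ : Equiv.Perm (Fin (n+1)) => NoDoubleAsc σ ∧ σ (Fin.last n) = j), 2 ^ dd σ

/-- ... additionally ending with a descent -/
noncomputable def Qst (n : ℕ) (j : Fin (n+1)) : ℕ :=
  ∑ σ ∈ Finset.univ.filter
    (fun σ : Equiv.Perm (Fin (n+1)) => NoDoubleAsc σ ∧ σ (Fin.last n) = j ∧ Desc σ (n-1)),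
    2 ^ dd σ

lemma sum_ins (p : ℕ) (F : Equiv.Perm (Fin (p+3)) → ℕ) :
    ∑ π : Equiv.Perm (Fin (p+3)), F π
      = ∑ τ : Equiv.Perm (Fin (p+2)), ∑ v : Fin (p+3), F (ins τ v) := by
  have h := Fintype.sum_bijective _ (ins_bijective (n := p+1))
    (fun q : Equiv.Perm (Fin (p+2)) × Fin (p+3) => F (ins q.1 q.2)) F (fun x => rfl)
  rw [← h, Fintype.sum_prod_type]

lemma Rst_expand (n : ℕ) (u : Fin (n+2)) :
    Rst (n+1) u = ∑ τ : Equiv.Perm (Fin (n+2)),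
      (if τ (Fin.last (n+1)) = u then (if NoDoubleAsc τ then 2 ^ dd τ else 0) else 0) := by
  rw [Rst, Finset.sum_filter]
  apply Finset.sum_congr rfl
  intro τ _
  by_cases h1 : τ (Fin.last (n+1)) = u <;> by_cases h2 : NoDoubleAsc τ <;> simp [h1, h2]

lemma Qst_expand (n : ℕ) (u : Fin (n+2)) :
    Qst (n+1) u = ∑ τ : Equiv.Perm (Fin (n+2)),
      (if τ (Fin.last (n+1)) = u then (if NoDoubleAsc τ ∧ Desc τ n then 2 ^ dd τ else 0)
       else 0) := by
  rw [Qst, Finset.sum_filter]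
  apply Finset.sum_congr rfl
  intro τ _
  have hn : n + 1 - 1 = n := by omega
  rw [hn]
  by_cases h1 : τ (Fin.last (n+1)) = u <;> by_cases h2 : NoDoubleAsc τ <;>
    by_cases h3 : Desc τ n <;> simp [h1, h2, h3]


lemma transfer_R (p : ℕ) (w : Fin (p+3)) :
    Rst (p+2) w = ∑ u : Fin (p+2),
      (if Fin.castSucc u < w then Qst (p+1) u else Rst (p+1) u + Qst (p+1) u) := by
  -- LHS reduction
  have lhs1 : Rst (p+2) w = ∑ π : Equiv.Perm (Fin (p+3)),
      (if NoDoubleAsc π ∧ π (Fin.last (p+2)) = w then 2 ^ dd π else 0) := by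
    rw [Rst, Finset.sum_filter]
  rw [lhs1, sum_ins]
  have coll : ∀ τ : Equiv.Perm (Fin (p+2)),
      (∑ v : Fin (p+3),
        if NoDoubleAsc (ins τ v) ∧ (ins τ v) (Fin.last (p+2)) = w then 2 ^ dd (ins τ v) else 0)
      = (if NoDoubleAsc (ins τ w) then 2 ^ dd (ins τ w) else 0) := by
    intro τ
    have e : ∀ v : Fin (p+3),
        (if NoDoubleAsc (ins τ v) ∧ (ins τ v) (Fin.last (p+2)) = w then 2 ^ dd (ins τ v) else 0)
        = (if v = w then (if NoDoubleAsc (ins τ v) then 2 ^ dd (ins τ v) else 0) else 0) := by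
      intro v
      rw [ins_last]
      by_cases hv : v = w
      · subst hv; simp
      · simp [hv]
    rw [Finset.sum_congr rfl (fun v _ => e v), Finset.sum_ite_eq' Finset.univ w
      (fun v => if NoDoubleAsc (ins τ v) then 2 ^ dd (ins τ v) else 0)]
    simp
  rw [Finset.sum_congr rfl (fun τ _ => coll τ)]
  -- RHS reduction
  have rhs1 : ∀ u : Fin (p+2),
      (if Fin.castSucc u < w then Qst (p+1) u else Rst (p+1) u + Qst (p+1) u)
      = Qst (p+1) u + (if Fin.castSucc u < w then 0 else Rst (p+1) u) := by
    intro u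
    by_cases hc : Fin.castSucc u < w <;> simp [hc] <;> omega
  rw [Finset.sum_congr rfl (fun u _ => rhs1 u), Finset.sum_add_distrib]
  have rhs2 : (∑ u : Fin (p+2), Qst (p+1) u)
      = ∑ τ : Equiv.Perm (Fin (p+2)), (if NoDoubleAsc τ ∧ Desc τ p then 2 ^ dd τ else 0) := by
    rw [Finset.sum_congr rfl (fun u _ => Qst_expand p u), Finset.sum_comm]
    apply Finset.sum_congr rfl
    intro τ _
    rw [Finset.sum_ite_eq Finset.univ (τ (Fin.last (p+1)))
      (fun _ => (if NoDoubleAsc τ ∧ Desc τ p then 2 ^ dd τ else 0))]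
    simp
  have rhs3 : (∑ u : Fin (p+2), (if Fin.castSucc u < w then 0 else Rst (p+1) u))
      = ∑ τ : Equiv.Perm (Fin (p+2)),
          (if Fin.castSucc (τ (Fin.last (p+1))) < w then 0
           else (if NoDoubleAsc τ then 2 ^ dd τ else 0)) := by
    have e : ∀ u : Fin (p+2), (if Fin.castSucc u < w then 0 else Rst (p+1) u)
        = ∑ τ : Equiv.Perm (Fin (p+2)),
            (if τ (Fin.last (p+1)) = u then
              (if Fin.castSucc u < w then 0 else (if NoDoubleAsc τ then 2 ^ dd τ else 0))
             else 0) := by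
      intro u
      by_cases hc : Fin.castSucc u < w
      · simp [hc]
      · rw [if_neg hc, Rst_expand p u]
        apply Finset.sum_congr rfl
        intro τ _
        rw [if_neg hc]
    rw [Finset.sum_congr rfl (fun u _ => e u), Finset.sum_comm]
    apply Finset.sum_congr rfl
    intro τ _
    rw [Finset.sum_ite_eq Finset.univ (τ (Fin.last (p+1)))
      (fun u => (if Fin.castSucc u < w then 0 else (if NoDoubleAsc τ then 2 ^ dd τ else 0)))]
    simp
  rw [rhs2, rhs3, ← Finset.sum_add_distrib]
  -- pointwise identity in τ
  apply Finset.sum_congr rfl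
  intro τ _
  by_cases hA : Fin.castSucc (τ (Fin.last (p+1))) < w
  · rw [if_pos hA, add_zero]
    have hc : NoDoubleAsc (ins τ w) ↔ (NoDoubleAsc τ ∧ Desc τ p) := by
      rw [noaa_ins]
      constructor
      · rintro ⟨h1, h2⟩
        refine ⟨h1, (not_asc_iff_desc τ (by omega)).mp ?_⟩
        intro ha; exact h2 ⟨ha, hA⟩
      · rintro ⟨h1, h2⟩
        refine ⟨h1, ?_⟩
        rintro ⟨ha, _⟩
        exact (not_asc_iff_desc τ (by omega)).mpr h2 ha
    have hv : 2 ^ dd (ins τ w) = 2 ^ dd τ := by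
      rw [pow_dd_ins, if_neg, mul_one]
      rintro ⟨_, hle⟩
      exact absurd hA (not_lt.mpr hle)
    rw [if_congr hc rfl rfl, hv]
  · rw [if_neg hA]
    have hA' : w ≤ Fin.castSucc (τ (Fin.last (p+1))) := not_lt.mp hA
    have hc : NoDoubleAsc (ins τ w) ↔ NoDoubleAsc τ := by
      rw [noaa_ins]
      constructor
      · exact fun h => h.1
      · refine fun h => ⟨h, ?_⟩
        rintro ⟨_, hlt⟩
        exact absurd hlt hA
    rw [if_congr hc rfl rfl, pow_dd_ins]
    by_cases hn : NoDoubleAsc τ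
    · rw [if_pos hn, if_pos hn]
      by_cases hD : Desc τ p
      · rw [if_pos ⟨hD, hA'⟩, if_pos ⟨hn, hD⟩]
        ring
      · rw [if_neg (fun hh => hD hh.1), if_neg (fun hh => hD hh.2)]; simp
    · rw [if_neg hn, if_neg hn, if_neg (fun hh => hn hh.1)]

lemma transfer_Q (p : ℕ) (w : Fin (p+3)) :
    Qst (p+2) w = ∑ u : Fin (p+2),
      (if Fin.castSucc u < w then 0 else Rst (p+1) u + Qst (p+1) u) := by
  have lhs1 : Qst (p+2) w = ∑ π : Equiv.Perm (Fin (p+3)),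
      (if NoDoubleAsc π ∧ π (Fin.last (p+2)) = w ∧ Desc π (p+1) then 2 ^ dd π else 0) := by
    rw [Qst, Finset.sum_filter]
    apply Finset.sum_congr rfl
    intro π _
    have hn : p + 2 - 1 = p + 1 := by omega
    rw [hn]
  rw [lhs1, sum_ins]
  have coll : ∀ τ : Equiv.Perm (Fin (p+2)),
      (∑ v : Fin (p+3),
        if NoDoubleAsc (ins τ v) ∧ (ins τ v) (Fin.last (p+2)) = w ∧ Desc (ins τ v) (p+1)
        then 2 ^ dd (ins τ v) else 0)
      = (if NoDoubleAsc (ins τ w) ∧ Desc (ins τ w) (p+1) then 2 ^ dd (ins τ w) else 0) := by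
    intro τ
    have e : ∀ v : Fin (p+3),
        (if NoDoubleAsc (ins τ v) ∧ (ins τ v) (Fin.last (p+2)) = w ∧ Desc (ins τ v) (p+1)
         then 2 ^ dd (ins τ v) else 0)
        = (if v = w then
            (if NoDoubleAsc (ins τ v) ∧ Desc (ins τ v) (p+1) then 2 ^ dd (ins τ v) else 0)
           else 0) := by
      intro v
      rw [ins_last]
      by_cases hv : v = w
      · subst hv; simp [and_assoc]
      · simp [hv]
    rw [Finset.sum_congr rfl (fun v _ => e v), Finset.sum_ite_eq' Finset.univ w
      (fun v => if NoDoubleAsc (ins τ v) ∧ Desc (ins τ v) (p+1) then 2 ^ dd (ins τ v) else 0)]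
    simp
  rw [Finset.sum_congr rfl (fun τ _ => coll τ)]
  -- RHS
  have rhs1 : ∀ u : Fin (p+2),
      (if Fin.castSucc u < w then 0 else Rst (p+1) u + Qst (p+1) u)
      = (if Fin.castSucc u < w then 0 else Rst (p+1) u)
        + (if Fin.castSucc u < w then 0 else Qst (p+1) u) := by
    intro u
    by_cases hc : Fin.castSucc u < w <;> simp [hc]
  rw [Finset.sum_congr rfl (fun u _ => rhs1 u), Finset.sum_add_distrib]
  have key : ∀ f : Equiv.Perm (Fin (p+2)) → ℕ,
      (∑ u : Fin (p+2), (if Fin.castSucc u < w then 0 else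
        ∑ τ : Equiv.Perm (Fin (p+2)), (if τ (Fin.last (p+1)) = u then f τ else 0)))
      = ∑ τ : Equiv.Perm (Fin (p+2)),
          (if Fin.castSucc (τ (Fin.last (p+1))) < w then 0 else f τ) := by
    intro f
    have e : ∀ u : Fin (p+2), (if Fin.castSucc u < w then 0 else
        ∑ τ : Equiv.Perm (Fin (p+2)), (if τ (Fin.last (p+1)) = u then f τ else 0))
        = ∑ τ : Equiv.Perm (Fin (p+2)),
            (if τ (Fin.last (p+1)) = u then (if Fin.castSucc u < w then 0 else f τ) else 0) := by
      intro u
      by_cases hc : Fin.castSucc u < w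
      · simp [hc]
      · rw [if_neg hc]
        apply Finset.sum_congr rfl
        intro τ _
        rw [if_neg hc]
    rw [Finset.sum_congr rfl (fun u _ => e u), Finset.sum_comm]
    apply Finset.sum_congr rfl
    intro τ _
    rw [Finset.sum_ite_eq Finset.univ (τ (Fin.last (p+1)))
      (fun u => (if Fin.castSucc u < w then 0 else f τ))]
    simp
  have rhsR : (∑ u : Fin (p+2), (if Fin.castSucc u < w then 0 else Rst (p+1) u))
      = ∑ τ : Equiv.Perm (Fin (p+2)),
          (if Fin.castSucc (τ (Fin.last (p+1))) < w then 0
           else (if NoDoubleAsc τ then 2 ^ dd τ else 0)) := by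
    rw [← key (fun τ => if NoDoubleAsc τ then 2 ^ dd τ else 0)]
    apply Finset.sum_congr rfl
    intro u _
    rw [← Rst_expand p u]
  have rhsQ : (∑ u : Fin (p+2), (if Fin.castSucc u < w then 0 else Qst (p+1) u))
      = ∑ τ : Equiv.Perm (Fin (p+2)),
          (if Fin.castSucc (τ (Fin.last (p+1))) < w then 0
           else (if NoDoubleAsc τ ∧ Desc τ p then 2 ^ dd τ else 0)) := by
    rw [← key (fun τ => if NoDoubleAsc τ ∧ Desc τ p then 2 ^ dd τ else 0)]
    apply Finset.sum_congr rfl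
    intro u _
    rw [← Qst_expand p u]
  rw [rhsR, rhsQ, ← Finset.sum_add_distrib]
  -- pointwise in τ
  apply Finset.sum_congr rfl
  intro τ _
  have hdesc : Desc (ins τ w) (p+1) ↔ w ≤ Fin.castSucc (τ (Fin.last (p+1))) :=
    desc_ins_last τ w
  by_cases hA : Fin.castSucc (τ (Fin.last (p+1))) < w
  · rw [if_pos hA, if_pos hA, if_neg, add_zero]
    rintro ⟨_, hd⟩
    exact absurd hA (not_lt.mpr (hdesc.mp hd))
  · rw [if_neg hA, if_neg hA]
    have hA' : w ≤ Fin.castSucc (τ (Fin.last (p+1))) := not_lt.mp hA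
    have hc : (NoDoubleAsc (ins τ w) ∧ Desc (ins τ w) (p+1)) ↔ NoDoubleAsc τ := by
      rw [hdesc, noaa_ins]
      constructor
      · rintro ⟨⟨h1, _⟩, _⟩; exact h1
      · refine fun h => ⟨⟨h, ?_⟩, hA'⟩
        rintro ⟨_, hlt⟩
        exact absurd hlt hA
    rw [if_congr hc rfl rfl, pow_dd_ins]
    by_cases hn : NoDoubleAsc τ
    · rw [if_pos hn, if_pos hn]
      by_cases hD : Desc τ p
      · rw [if_pos ⟨hD, hA'⟩, if_pos ⟨hn, hD⟩]
        ring
      · rw [if_neg (fun hh => hD hh.1), if_neg (fun hh => hD hh.2)]; simp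
    · rw [if_neg hn, if_neg hn, if_neg (fun hh => hn hh.1)]



lemma noaa2 (π : Equiv.Perm (Fin 2)) : NoDoubleAsc π := by
  rintro i ⟨-, ⟨hb, -⟩⟩; omega

lemma dd2 (π : Equiv.Perm (Fin 2)) : dd π = 0 := by
  rw [dd, Finset.card_eq_zero, Finset.filter_eq_empty_iff]
  rintro i - ⟨-, ⟨hb, -⟩⟩; omega

lemma desc20 (σ : Equiv.Perm (Fin 2)) : Desc σ 0 ↔ σ 1 < σ 0 :=
  ⟨fun ⟨_, hx⟩ => hx, fun hx => ⟨by omega, hx⟩⟩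

lemma key2 (σ : Equiv.Perm (Fin 2)) (j : Fin 2) :
    (σ (Fin.last 1) = j) ↔ σ = (if (j:ℕ) = 0 then Equiv.swap 0 1 else 1) := by
  revert σ j; decide

lemma key3 (σ : Equiv.Perm (Fin 2)) (j : Fin 2) :
    (σ (Fin.last 1) = j ∧ σ 1 < σ 0) ↔ ((j:ℕ) = 0 ∧ σ = Equiv.swap 0 1) := by
  revert σ j; decide

lemma Rst_base (j : Fin 2) : Rst 1 j = 1 := by
  have h1 : Rst 1 j = ∑ σ ∈ Finset.univ.filter
      (fun σ : Equiv.Perm (Fin 2) => NoDoubleAsc σ ∧ σ (Fin.last 1) = j), 1 := by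
    rw [Rst]
    exact Finset.sum_congr rfl (fun σ _ => by rw [dd2 σ, pow_zero])
  rw [h1, Finset.sum_const, smul_eq_mul, mul_one]
  have h2 : Finset.univ.filter
      (fun σ : Equiv.Perm (Fin 2) => NoDoubleAsc σ ∧ σ (Fin.last 1) = j)
      = {if (j:ℕ) = 0 then Equiv.swap 0 1 else 1} := by
    ext σ
    simp only [Finset.mem_filter, Finset.mem_univ, true_and, Finset.mem_singleton]
    rw [and_iff_right (noaa2 σ)]
    exact key2 σ j
  rw [h2, Finset.card_singleton]

lemma Qst_base (j : Fin 2) : Qst 1 j = if (j:ℕ) = 0 then 1 else 0 := by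
  have h1 : Qst 1 j = ∑ σ ∈ Finset.univ.filter
      (fun σ : Equiv.Perm (Fin 2) =>
        NoDoubleAsc σ ∧ σ (Fin.last 1) = j ∧ Desc σ (1-1)), 1 := by
    rw [Qst]
    exact Finset.sum_congr rfl (fun σ _ => by rw [dd2 σ, pow_zero])
  rw [h1, Finset.sum_const, smul_eq_mul, mul_one]
  have h2 : Finset.univ.filter
      (fun σ : Equiv.Perm (Fin 2) => NoDoubleAsc σ ∧ σ (Fin.last 1) = j ∧ Desc σ (1-1))
      = (if (j:ℕ) = 0 then {Equiv.swap 0 1} else (∅ : Finset (Equiv.Perm (Fin 2)))) := by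
    ext σ
    simp only [Finset.mem_filter, Finset.mem_univ, true_and]
    rw [and_iff_right (noaa2 σ)]
    have hd : Desc σ (1-1) ↔ σ 1 < σ 0 := by
      have : (1:ℕ) - 1 = 0 := rfl
      rw [this, desc20]
    rw [hd]
    rw [key3 σ j]
    by_cases hj : (j:ℕ) = 0
    · simp [hj]
    · simp [hj]
  rw [h2]
  by_cases hj : (j:ℕ) = 0
  · simp [hj]
  · simp [hj]



----------------------------------------------------------------

lemma split_ite_sum (w' N : ℕ) (h : w' ≤ N) (F : ℕ → ℕ) :
    (∑ x ∈ range N, if x < w' then 0 else F x) = ∑ x ∈ Ico w' N, F x := by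
  rw [range_eq_Ico, ← Finset.sum_Ico_consecutive _ (Nat.zero_le w') h]
  have h1 : (∑ x ∈ Ico 0 w', if x < w' then 0 else F x) = 0 := by
    apply Finset.sum_eq_zero
    intro x hx
    rw [if_pos (Finset.mem_Ico.mp hx).2]
  have h2 : (∑ x ∈ Ico w' N, if x < w' then 0 else F x) = ∑ x ∈ Ico w' N, F x := by
    apply Finset.sum_congr rfl
    intro x hx
    rw [if_neg (not_lt.mpr (Finset.mem_Ico.mp hx).1)]
  rw [h1, h2, zero_add]

lemma sum_ico_choose (w' M s : ℕ) (h : w' ≤ M + 1) :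
    (∑ x ∈ Ico w' (M+1), (M - x).choose s) = (M + 1 - w').choose (s+1) := by
  rw [Finset.sum_Ico_eq_sum_range]
  have e : ∀ i ∈ range (M + 1 - w'), (M - (w' + i)).choose s
      = ((M + 1 - w') - 1 - i).choose s := by
    intro i hi
    have hi' : i < M + 1 - w' := Finset.mem_range.mp hi
    congr 1
    omega
  rw [Finset.sum_congr rfl e, Finset.sum_range_reflect (fun t => t.choose s) (M + 1 - w'),
    hockey]

lemma ind_sum (w' N : ℕ) (hN : 0 < N) :
    (∑ x ∈ Ico w' N, if x = 0 then 1 else 0) = if w' = 0 then 1 else 0 := by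
  rw [Finset.sum_ite_eq' (Ico w' N) 0 (fun _ => 1)]
  by_cases h : w' = 0
  · rw [if_pos h, if_pos (Finset.mem_Ico.mpr ⟨by omega, hN⟩)]
  · rw [if_neg h, if_neg]
    intro hmem
    exact h (Nat.le_zero.mp (Finset.mem_Ico.mp hmem).1)


/-- closed forms for `Rst` and `Qst`. -/
lemma CF : ∀ p : ℕ,
    (∀ j : Fin (p+2), Rst (p+1) j
        = ∑ s ∈ range (p+2), (p + 1 - (j:ℕ)).choose s * Bc (p + 1 - s))
    ∧ (∀ j : Fin (p+2), Qst (p+1) j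
        = (∑ s ∈ range (p+2), (p + 1 - (j:ℕ)).choose s * s * Bc (p + 1 - s))
          + (if (j:ℕ) = 0 then 1 else 0)) := by
  intro p
  induction p with
  | zero =>
    constructor
    · intro j
      rw [Rst_base j]
      rw [Finset.sum_range_succ, Finset.sum_range_succ, Finset.sum_range_zero]
      rw [Bc_zero, Bc_one]
      have hj : (j:ℕ) < 2 := j.isLt
      interval_cases h : (j:ℕ) <;> simp
    · intro j
      rw [Qst_base j]
      rw [Finset.sum_range_succ, Finset.sum_range_succ, Finset.sum_range_zero]
      rw [Bc_zero, Bc_one]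
      have hj : (j:ℕ) < 2 := j.isLt
      interval_cases h : (j:ℕ) <;> simp
  | succ p ih =>
    obtain ⟨ihR, ihQ⟩ := ih
    have key : ∀ w : Fin (p+3), ∀ G : ℕ → ℕ,
        (∑ u : Fin (p+2), (if Fin.castSucc u < w then 0 else G (u:ℕ)))
          = ∑ x ∈ Ico (w:ℕ) (p+2), G x := by
      intro w G
      have e : ∀ u : Fin (p+2), (if Fin.castSucc u < w then 0 else G (u:ℕ))
          = (if (u:ℕ) < (w:ℕ) then 0 else G (u:ℕ)) := by
        intro u
        have : Fin.castSucc u < w ↔ (u:ℕ) < (w:ℕ) := by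
          rw [Fin.lt_def]; simp
        rw [if_congr this rfl rfl]
      rw [Finset.sum_congr rfl (fun u _ => e u),
        Fin.sum_univ_eq_sum_range (fun x => if x < (w:ℕ) then 0 else G x) (p+2),
        split_ite_sum (w:ℕ) (p+2) (by omega : (w:ℕ) ≤ p+2) G]
    have tailC : ∀ w' s : ℕ, w' ≤ p + 2 →
        (∑ x ∈ Ico w' (p+2), (p + 1 - x).choose s) = (p + 2 - w').choose (s+1) := by
      intro w' s hw
      exact sum_ico_choose w' (p+1) s (by omega)
    -- the tail sum of the R closed form
    have tailR : ∀ w : Fin (p+3),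
        (∑ x ∈ Ico (w:ℕ) (p+2), ∑ s ∈ range (p+2), (p + 1 - x).choose s * Bc (p + 1 - s))
        = ∑ s ∈ range (p+2), (p + 2 - (w:ℕ)).choose (s+1) * Bc (p + 1 - s) := by
      intro w
      rw [Finset.sum_comm]
      apply Finset.sum_congr rfl
      intro s _
      rw [← Finset.sum_mul, tailC (w:ℕ) s (by omega)]
    -- the tail sum of the Q closed form (with indicator)
    have tailQ : ∀ w : Fin (p+3),
        (∑ x ∈ Ico (w:ℕ) (p+2),
          ((∑ s ∈ range (p+2), (p + 1 - x).choose s * s * Bc (p + 1 - s))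
            + (if x = 0 then 1 else 0)))
        = (∑ s ∈ range (p+2), (p + 2 - (w:ℕ)).choose (s+1) * s * Bc (p + 1 - s))
          + (if (w:ℕ) = 0 then 1 else 0) := by
      intro w
      rw [Finset.sum_add_distrib, ind_sum (w:ℕ) (p+2) (by omega)]
      congr 1
      rw [Finset.sum_comm]
      apply Finset.sum_congr rfl
      intro s _
      have e : ∀ x ∈ Ico (w:ℕ) (p+2), (p + 1 - x).choose s * s * Bc (p + 1 - s)
          = (p + 1 - x).choose s * (s * Bc (p + 1 - s)) := fun x _ => by ring
      rw [Finset.sum_congr rfl e, ← Finset.sum_mul, tailC (w:ℕ) s (by omega)]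
      ring
    constructor
    -- ======== R case ========
    · intro w
      rw [transfer_R p w]
      have e1 : ∀ u : Fin (p+2),
          (if Fin.castSucc u < w then Qst (p+1) u else Rst (p+1) u + Qst (p+1) u)
          = Qst (p+1) u + (if Fin.castSucc u < w then 0 else Rst (p+1) u) := by
        intro u
        by_cases hc : Fin.castSucc u < w
        · rw [if_pos hc, if_pos hc, add_zero]
        · rw [if_neg hc, if_neg hc]; omega
      rw [Finset.sum_congr rfl (fun u _ => e1 u), Finset.sum_add_distrib]
      -- full Q-sum equals Bc (p+2)
      have hQfull : (∑ u : Fin (p+2), Qst (p+1) u) = Bc (p+2) := by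
        rw [Finset.sum_congr rfl (fun u (_ : u ∈ Finset.univ) => ihQ u),
          Fin.sum_univ_eq_sum_range (fun x =>
            (∑ s ∈ range (p+2), (p + 1 - x).choose s * s * Bc (p + 1 - s))
              + (if x = 0 then 1 else 0)) (p+2)]
        have t0 := tailQ ⟨0, by omega⟩
        simp only [Fin.val_mk, Nat.sub_zero] at t0
        simp only [if_true] at t0
        rw [← range_eq_Ico] at t0
        rw [t0]
        exact (conv (p+1)).symm
      rw [hQfull]
      -- the R tail
      have hRtail : (∑ u : Fin (p+2), (if Fin.castSucc u < w then 0 else Rst (p+1) u))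
          = ∑ s ∈ range (p+2), (p + 2 - (w:ℕ)).choose (s+1) * Bc (p + 1 - s) := by
        have e2 : ∀ u : Fin (p+2), (if Fin.castSucc u < w then 0 else Rst (p+1) u)
            = (if Fin.castSucc u < w then 0
               else (∑ s ∈ range (p+2), (p + 1 - (u:ℕ)).choose s * Bc (p + 1 - s))) := by
          intro u
          rw [ihR u]
        rw [Finset.sum_congr rfl (fun u _ => e2 u),
          key w (fun x => ∑ s ∈ range (p+2), (p + 1 - x).choose s * Bc (p + 1 - s)),
          tailR w]
      rw [hRtail]
      -- assemble
      rw [Finset.sum_range_succ' (fun s => (p + 2 - (w:ℕ)).choose s * Bc (p + 2 - s)) (p+2)]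
      have e3 : ∀ i ∈ range (p+2), (p + 2 - (w:ℕ)).choose (i+1) * Bc (p + 2 - (i+1))
          = (p + 2 - (w:ℕ)).choose (i+1) * Bc (p + 1 - i) := by
        intro i _
        congr 2
        omega
      rw [Finset.sum_congr rfl e3]
      simp [add_comm]
    -- ======== Q case ========
    · intro w
      rw [transfer_Q p w]
      have e2 : ∀ u : Fin (p+2),
          (if Fin.castSucc u < w then 0 else Rst (p+1) u + Qst (p+1) u)
          = (if Fin.castSucc u < w then 0
             else ((∑ s ∈ range (p+2), (p + 1 - (u:ℕ)).choose s * Bc (p + 1 - s))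
                + ((∑ s ∈ range (p+2), (p + 1 - (u:ℕ)).choose s * s * Bc (p + 1 - s))
                  + (if (u:ℕ) = 0 then 1 else 0)))) := by
        intro u
        rw [ihR u, ihQ u]
      rw [Finset.sum_congr rfl (fun u _ => e2 u),
        key w (fun x => (∑ s ∈ range (p+2), (p + 1 - x).choose s * Bc (p + 1 - s))
          + ((∑ s ∈ range (p+2), (p + 1 - x).choose s * s * Bc (p + 1 - s))
            + (if x = 0 then 1 else 0)))]
      rw [Finset.sum_add_distrib, tailR w, tailQ w]
      -- assemble
      rw [Finset.sum_range_succ' (fun s => (p + 2 - (w:ℕ)).choose s * s * Bc (p + 2 - s)) (p+2)]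
      have e3 : ∀ i ∈ range (p+2), (p + 2 - (w:ℕ)).choose (i+1) * (i+1) * Bc (p + 2 - (i+1))
          = (p + 2 - (w:ℕ)).choose (i+1) * Bc (p + 1 - i)
            + (p + 2 - (w:ℕ)).choose (i+1) * i * Bc (p + 1 - i) := by
        intro i _
        have : p + 2 - (i+1) = p + 1 - i := by omega
        rw [this]
        ring
      rw [Finset.sum_congr rfl e3, Finset.sum_add_distrib]
      simp [add_assoc, add_comm, add_left_comm]



lemma alpha_partition (n : ℕ) :
    alpha (n+2) = ∑ j : Fin (n+2), Rst (n+1) j := by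
  rw [Finset.sum_congr rfl (fun j (_ : j ∈ Finset.univ) => Rst_expand n j), Finset.sum_comm]
  rw [alpha, Finset.sum_filter]
  apply Finset.sum_congr rfl
  intro τ _
  rw [Finset.sum_ite_eq Finset.univ (τ (Fin.last (n+1)))
    (fun _ => (if NoDoubleAsc τ then 2 ^ dd τ else 0))]
  simp

lemma alphaForm (p : ℕ) :
    alpha (p+2) = ∑ m ∈ range (p+2), (p+2).choose m * Bc m := by
  rw [alpha_partition p,
    Finset.sum_congr rfl (fun j (_ : j ∈ Finset.univ) => (CF p).1 j),
    Fin.sum_univ_eq_sum_range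
      (fun x => ∑ s ∈ range (p+2), (p + 1 - x).choose s * Bc (p + 1 - s)) (p+2),
    Finset.sum_comm]
  have e1 : ∀ s ∈ range (p+2),
      (∑ x ∈ range (p+2), (p + 1 - x).choose s * Bc (p + 1 - s))
      = (p+2).choose (s+1) * Bc (p + 1 - s) := by
    intro s _
    rw [← Finset.sum_mul, range_eq_Ico, sum_ico_choose 0 (p+1) s (by omega)]
    norm_num
  rw [Finset.sum_congr rfl e1]
  rw [← Finset.sum_range_reflect (fun m => (p+2).choose m * Bc m) (p+2)]
  apply Finset.sum_congr rfl
  intro s hs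
  have hs' : s < p + 2 := Finset.mem_range.mp hs
  have h1 : p + 2 - 1 - s = p + 1 - s := by omega
  have h2 : (p+2).choose (p + 1 - s) = (p+2).choose (s+1) := by
    have : p + 1 - s = (p+2) - (s+1) := by omega
    rw [this, Nat.choose_symm (by omega : s + 1 ≤ p + 2)]
  rw [h1, h2]

/-- For n ≥ 3, α_n = n · α_{n−1} + 1 + (−1)^n. -/
theorem alpha_recursion (n : ℕ) (hn : 3 ≤ n) :
    (alpha n : ℤ) = n * alpha (n - 1) + 1 + (-1) ^ n := by
  obtain ⟨q, rfl⟩ : ∃ q, n = q + 3 := ⟨n - 3, by omega⟩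
  have h1 : q + 3 = (q + 1) + 2 := by omega
  have h2 : q + 3 - 1 = q + 2 := by omega
  rw [h2, h1, alphaForm (q+1), alphaForm q]
  have := final_alg (q+1)
  push_cast at this ⊢
  convert this using 2 <;> push_cast <;> ring
end

section
/- Let α_n(b,b) = Σ 2^{dd(π)} over permutations of [n] with no double ascents whose descent word starts and ends with a descent. Then for all n ≥ 2, α_n(b,b) = ⌊n!/e + 1/2⌋, the nearest integer to n!/e. -/
open Finset
open scoped Classical

/-- α_n(b,b) = Σ 2^{dd(π)} over permutations of [n] with no double ascents whose
descent word starts and ends with a descent. -/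
noncomputable def alphaBB (n : ℕ) : ℕ :=
  ∑ π ∈ Finset.univ.filter
      (fun π : Equiv.Perm (Fin n) => NoDoubleAsc π ∧ Desc π 0 ∧ Desc π (n - 2)),
    2 ^ dd π

/-!
Record `π` as the word `π 0, π 1, …` and the weight `2 ^ dd π` as a choice of a set `S` of marked
double descents. A nonempty marked word on a letter set `V` splits uniquely into a first block and
a marked word on the remaining letters: the block is a decreasing run of `k ≥ 2` letters carrying
one of `k - 1` mark patterns (its first `t ≤ k - 2` positions), and the junction after it is an
ascent or a marked descent. This gives `a V = ∑_{T ⊆ V} (#T - 1) * a (V \ T)`, the recursion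
`D n = ∑ₖ C(n,k) (k - 1) D(n - k)` of the derangement numbers, which follows from counting
permutations by their fixed points, `∑ₖ C(n,k) D(n - k) = n!`. Finally `D n / n!` is a partial sum
of the series of `e⁻¹`, and its tail gives `|n! / e - D n| ≤ (n + 2) / (n + 1)² < 1 / 2`.
-/

namespace List

variable {α : Type*} (r : α → α → Prop)

def AdjRel (l : List α) (i : ℕ) : Prop :=
  ∃ a ∈ l[i]?, ∃ b ∈ l[i + 1]?, r a b

variable {r} {l l₁ l₂ : List α} {i k : ℕ}

theorem adjRel_iff_getElem : AdjRel r l i ↔ ∃ h : i + 1 < l.length, r l[i] l[i + 1] := by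
  simp only [AdjRel, Option.mem_def, getElem?_eq_some_iff]
  constructor
  · rintro ⟨_, ⟨hi, rfl⟩, _, ⟨hi1, rfl⟩, h⟩
    exact ⟨hi1, h⟩
  · rintro ⟨hi1, h⟩
    exact ⟨_, ⟨by omega, rfl⟩, _, ⟨hi1, rfl⟩, h⟩

theorem AdjRel.lt_length (h : AdjRel r l i) : i + 1 < l.length :=
  (adjRel_iff_getElem.1 h).1

theorem adjRel_drop : AdjRel r (l.drop k) i ↔ AdjRel r l (k + i) := by
  simp [AdjRel, Nat.add_assoc]

theorem adjRel_take (h : i + 1 < k) : AdjRel r (l.take k) i ↔ AdjRel r l i := by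
  simp [AdjRel, h, show i < k by omega]

theorem adjRel_append_left (h : i + 1 < l₁.length) : AdjRel r (l₁ ++ l₂) i ↔ AdjRel r l₁ i := by
  simp [AdjRel, getElem?_append_left h, getElem?_append_left (show i < l₁.length by omega)]

theorem adjRel_append_right (h : l₁.length ≤ i) :
    AdjRel r (l₁ ++ l₂) i ↔ AdjRel r l₂ (i - l₁.length) := by
  simp [AdjRel, getElem?_append_right h, getElem?_append_right (h.trans i.le_succ),
    Nat.sub_add_comm h]

theorem Nodup.card_toFinset_take [DecidableEq α] (hl : l.Nodup) (hk : k ≤ l.length) :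
    #(l.take k).toFinset = k := by
  rw [toFinset_card_of_nodup ((take_sublist _ _).nodup hl), length_take, min_eq_left hk]

theorem isChain_iff_forall_adjRel : IsChain r l ↔ ∀ i, i + 1 < l.length → AdjRel r l i := by
  simp only [isChain_iff_getElem, adjRel_iff_getElem]
  exact ⟨fun h i hi => ⟨hi, h i hi⟩, fun h i hi => (h i hi).2⟩

theorem adjRel_ofFn {n : ℕ} {f : Fin n → α} :
    AdjRel r (ofFn f) i ↔ ∃ h : i + 1 < n, r (f ⟨i, by omega⟩) (f ⟨i + 1, h⟩) := by
  simp [adjRel_iff_getElem]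

end List

open Equiv in
theorem card_filter_fixedPoints_eq_numDerangements {α : Type*} [Fintype α] [DecidableEq α]
    (s : Finset α) :
    #{σ : Perm α | ∀ a, σ a = a ↔ a ∈ s} = numDerangements (Fintype.card α - #s) := by
  have hcompl : Fintype.card {a // a ∉ s} = Fintype.card α - #s := by
    rw [Fintype.card_subtype_compl, Fintype.card_coe]
  rw [← Fintype.card_subtype, ← hcompl, ← card_derangements_eq_numDerangements]
  refine Fintype.card_congr ((derangements.subtypeEquiv (· ∉ s)).trans
    (Equiv.subtypeEquivRight fun σ => ?_)).symm
  simpa [Function.mem_fixedPoints, Function.IsFixedPt] using forall_congr' fun _ => iff_comm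

theorem sum_choose_mul_numDerangements (n : ℕ) :
    ∑ k ∈ range (n + 1), n.choose k * numDerangements (n - k) = n.factorial := by
  have hfib := card_eq_sum_card_fiberwise (s := (univ : Finset (Equiv.Perm (Fin n))))
    (t := univ) (f := fun σ => ({a | σ a = a} : Finset (Fin n))) (fun _ _ => mem_univ _)
  have hsum := sum_powerset_apply_card (fun k => numDerangements (n - k) : ℕ → ℕ)
    (x := (univ : Finset (Fin n)))
  rw [card_univ, Fintype.card_perm, Fintype.card_fin] at hfib
  rw [powerset_univ, card_univ, Fintype.card_fin] at hsum
  simp only [smul_eq_mul] at hsum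
  rw [hfib, ← hsum]
  refine Finset.sum_congr rfl fun s _ => ?_
  have := card_filter_fixedPoints_eq_numDerangements s
  rw [Fintype.card_fin] at this
  convert this.symm using 2
  simp [Finset.ext_iff]

-- Truncated subtraction makes the terms `k = 0` and `k = 1` vanish.
theorem numDerangements_eq_sum_choose_mul {n : ℕ} (hn : n ≠ 0) :
    numDerangements n = ∑ k ∈ range (n + 1), n.choose k * ((k - 1) * numDerangements (n - k)) := by
  obtain ⟨m, rfl⟩ := Nat.exists_eq_add_one_of_ne_zero hn
  have hall := sum_choose_mul_numDerangements (m + 1)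
  have hweighted :
      ∑ j ∈ range (m + 1), (m + 1).choose (j + 1) * ((j + 1) * numDerangements (m - j))
        = (m + 1).factorial := by
    simp_rw [← mul_assoc, ← Nat.add_one_mul_choose_eq, mul_assoc, ← mul_sum,
      sum_choose_mul_numDerangements, Nat.factorial_succ]
  rw [sum_range_succ'] at hall ⊢
  simp only [add_mul, one_mul, mul_add, sum_add_distrib] at hweighted
  simp only [Nat.add_sub_cancel, Nat.add_sub_add_right, Nat.choose_zero_right, Nat.sub_zero,
    zero_tsub, zero_mul, mul_zero, add_zero] at hall ⊢
  omega

theorem numDerangements_eq_factorial_mul_sum (n : ℕ) :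
    (numDerangements n : ℝ) = n.factorial * ∑ k ∈ range (n + 1), (-1 : ℝ) ^ k / k.factorial := by
  have hsum := congrArg (Int.cast : ℤ → ℝ) (numDerangements_sum n)
  push_cast at hsum
  rw [hsum, mul_sum]
  refine Finset.sum_congr rfl fun k hk => ?_
  have h := Nat.factorial_mul_ascFactorial k (n - k)
  rw [Nat.add_sub_cancel' (mem_range_succ_iff.1 hk)] at h
  rw [← h]
  push_cast
  field_simp

theorem abs_factorial_div_exp_sub_numDerangements_le (n : ℕ) :
    |(n.factorial : ℝ) / Real.exp 1 - numDerangements n| ≤ (n + 2) / (n + 1) ^ 2 := by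
  have hfac : (0 : ℝ) < n.factorial := by positivity
  have htail := Real.exp_bound (x := -1) (by norm_num) (n := n + 1) n.succ_pos
  rw [abs_neg, abs_one, one_pow, one_mul] at htail
  calc |(n.factorial : ℝ) / Real.exp 1 - numDerangements n|
      = n.factorial * |Real.exp (-1) - ∑ k ∈ range (n + 1), (-1 : ℝ) ^ k / k.factorial| := by
        rw [numDerangements_eq_factorial_mul_sum, Real.exp_neg, div_eq_mul_inv, ← mul_sub,
          abs_mul, abs_of_pos hfac]
    _ ≤ n.factorial * ((n + 1).succ / ((n + 1).factorial * (n + 1 : ℕ))) := by gcongr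
    _ = (n + 2) / (n + 1) ^ 2 := by
        push_cast [Nat.factorial_succ]
        field_simp
        ring

theorem numDerangements_eq_floor {n : ℕ} (hn : 2 ≤ n) :
    (numDerangements n : ℤ) = ⌊(n.factorial : ℝ) / Real.exp 1 + 1 / 2⌋ := by
  have hclose := abs_le.mp ((abs_factorial_div_exp_sub_numDerangements_le n).trans
    (show ((n : ℝ) + 2) / (n + 1) ^ 2 ≤ 4 / 9 by
      have : (2 : ℝ) ≤ n := by exact_mod_cast hn
      rw [div_le_div_iff₀ (by positivity) (by norm_num)]
      nlinarith))
  rw [eq_comm, Int.floor_eq_iff]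
  push_cast
  constructor <;> linarith [hclose.1, hclose.2]

namespace AlphaBB

local notation "DescAt" => List.AdjRel (· > ·)

local notation "AscAt" => List.AdjRel (· < ·)

variable {l : List ℕ} {S T V : Finset ℕ} {i j t : ℕ}

theorem not_ascAt_of_descAt (h : DescAt l i) : ¬AscAt l i := by
  obtain ⟨_, h⟩ := List.adjRel_iff_getElem.1 h
  rw [List.adjRel_iff_getElem]
  rintro ⟨_, h'⟩
  exact lt_asymm h h'

theorem descAt_of_not_ascAt (hl : l.Nodup) (hi : i + 1 < l.length) (h : ¬AscAt l i) :
    DescAt l i := by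
  rw [List.adjRel_iff_getElem] at h ⊢
  refine ⟨hi, lt_of_le_of_ne (not_lt.1 fun h' => h ⟨hi, h'⟩) fun heq => ?_⟩
  simpa using hl.getElem_inj_iff.1 heq

-- Unlike in `alphaBB`, the empty word is admitted: it is the base case of the block recursion.
def IsBBWord (l : List ℕ) : Prop :=
  (l ≠ [] → DescAt l 0 ∧ DescAt l (l.length - 2)) ∧ ∀ i, ¬(AscAt l i ∧ AscAt l (i + 1))

noncomputable def ddSet (l : List ℕ) : Finset ℕ :=
  {i ∈ range l.length | DescAt l i ∧ DescAt l (i + 1)}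

theorem mem_ddSet : i ∈ ddSet l ↔ DescAt l i ∧ DescAt l (i + 1) := by
  simp only [ddSet, mem_filter, mem_range, and_iff_right_iff_imp]
  exact fun h => by have := h.2.lt_length; omega

abbrev MarkedWord := Σ _ : List ℕ, Finset ℕ

noncomputable def markedWords (V : Finset ℕ) : Finset MarkedWord :=
  {l ∈ V.val.lists.toFinset | IsBBWord l}.sigma fun l => (ddSet l).powerset

theorem mem_markedWords :
    (⟨l, S⟩ : MarkedWord) ∈ markedWords V ↔
      ((l : Multiset ℕ) = V.val ∧ IsBBWord l) ∧ S ⊆ ddSet l := by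
  simp [markedWords, Multiset.mem_lists_iff, eq_comm]

theorem markedWords_empty : markedWords ∅ = {⟨[], ∅⟩} := by
  ext ⟨l, S⟩
  simp only [mem_markedWords, mem_singleton, Sigma.mk.injEq, heq_eq_eq, Finset.empty_val,
    Multiset.coe_eq_zero]
  constructor
  · rintro ⟨⟨rfl, -⟩, hS⟩
    exact ⟨rfl, subset_empty.1 (by simpa [ddSet] using hS)⟩
  · rintro ⟨rfl, rfl⟩
    exact ⟨⟨rfl, fun h => absurd rfl h, fun i h => by simpa using h.1.lt_length⟩, empty_subset _⟩

noncomputable def firstGap (S : Finset ℕ) : ℕ := Nat.find (Infinite.exists_notMem_finset S)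

theorem firstGap_notMem (S : Finset ℕ) : firstGap S ∉ S :=
  Nat.find_spec (Infinite.exists_notMem_finset S)

theorem mem_of_lt_firstGap (h : i < firstGap S) : i ∈ S :=
  not_not.1 (Nat.find_min _ h)

theorem firstGap_eq (hlt : ∀ i < j, i ∈ S) (hj : j ∉ S) : firstGap S = j :=
  (Nat.find_eq_iff _).2 ⟨hj, fun i hi => not_not.2 (hlt i hi)⟩

theorem exists_blockEnd (l : List ℕ) (S : Finset ℕ) :
    ∃ j, firstGap S < j ∧ (¬DescAt l j ∨ j ∈ S) :=
  ⟨firstGap S + l.length + 1, by omega, Or.inl fun h => by have := h.lt_length; omega⟩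

/-- The first block of the marked word `⟨l, S⟩` runs through the marked positions
`0, …, firstGap S - 1` and ends at the first later position that is marked or not a descent. -/
noncomputable def blockLen (l : List ℕ) (S : Finset ℕ) : ℕ := Nat.find (exists_blockEnd l S) + 1

theorem firstGap_add_two_le_blockLen : firstGap S + 2 ≤ blockLen l S :=
  Nat.succ_le_succ (Nat.find_spec (exists_blockEnd l S)).1

theorem blockLen_sub_one_mem_iff (hS : S ⊆ ddSet l) :
    blockLen l S - 1 ∈ S ↔ DescAt l (blockLen l S - 1) := by
  have hcut := (Nat.find_spec (exists_blockEnd l S)).2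
  simp only [blockLen, Nat.add_sub_cancel] at hcut ⊢
  exact ⟨fun h => (mem_ddSet.1 (hS h)).1, fun h => hcut.resolve_left (not_not.2 h)⟩

theorem descAt_and_notMem_of_lt_blockLen (hi : firstGap S < i) (hik : i + 1 < blockLen l S) :
    DescAt l i ∧ i ∉ S := by
  have := Nat.find_min (exists_blockEnd l S) (show i < Nat.find (exists_blockEnd l S) by
    simp only [blockLen] at hik; omega)
  tauto

theorem lt_firstGap_or_le_of_mem (l : List ℕ) (hi : i ∈ S) :
    i < firstGap S ∨ blockLen l S - 1 ≤ i := by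
  by_contra! h
  obtain h' | h' := h.1.eq_or_lt
  · exact firstGap_notMem S (h' ▸ hi)
  · exact (descAt_and_notMem_of_lt_blockLen (l := l) h' (by omega)).2 hi

theorem blockLen_eq (hj : firstGap S < j) (hcut : ¬DescAt l j ∨ j ∈ S)
    (hmin : ∀ i, firstGap S < i → i < j → DescAt l i ∧ i ∉ S) : blockLen l S = j + 1 := by
  rw [blockLen, Nat.add_right_cancel_iff, Nat.find_eq_iff]
  exact ⟨⟨hj, hcut⟩, fun i hij ⟨hi, hicut⟩ => by have := hmin i hi hij; tauto⟩

theorem descAt_firstGap (h0 : DescAt l 0) (hS : S ⊆ ddSet l) : DescAt l (firstGap S) := by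
  rcases Nat.eq_zero_or_pos (firstGap S) with h | h
  · exact h ▸ h0
  · have := mem_ddSet.1 (hS (mem_of_lt_firstGap (Nat.sub_one_lt_of_lt h)))
    simpa [Nat.sub_add_cancel h] using this.2

theorem descAt_of_lt_blockLen (h0 : DescAt l 0) (hS : S ⊆ ddSet l) (hi : i + 1 < blockLen l S) :
    DescAt l i := by
  rcases lt_trichotomy i (firstGap S) with h | rfl | h
  · exact (mem_ddSet.1 (hS (mem_of_lt_firstGap h))).1
  · exact descAt_firstGap h0 hS
  · exact (descAt_and_notMem_of_lt_blockLen h hi).1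

theorem blockLen_le_length (h0 : DescAt l 0) (hS : S ⊆ ddSet l) : blockLen l S ≤ l.length := by
  have := (descAt_firstGap h0 hS).lt_length
  have := Nat.find_min' (exists_blockEnd l S) (m := l.length - 1)
    ⟨by omega, Or.inl fun h => by have := h.lt_length; omega⟩
  rw [blockLen]; omega

theorem descAt_blockLen (hl : IsBBWord l) (hnd : l.Nodup) (hS : S ⊆ ddSet l)
    (hlt : blockLen l S < l.length) : DescAt l (blockLen l S) := by
  have hcut := (Nat.find_spec (exists_blockEnd l S)).2
  set j := Nat.find (exists_blockEnd l S)
  change DescAt l (j + 1)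
  rcases hcut with hj | hj
  · have hasc : AscAt l j := by
      by_contra h
      exact hj (descAt_of_not_ascAt hnd (by simpa [blockLen] using hlt) h)
    have hend := (hl.1 (List.ne_nil_of_length_pos (by omega))).2
    have : j ≠ l.length - 2 := fun h => hj (h ▸ hend)
    exact descAt_of_not_ascAt hnd (by simp only [blockLen] at hlt; omega)
      fun h => hl.2 j ⟨hasc, h⟩
  · exact (mem_ddSet.1 (hS hj)).2

theorem descAt_sort_ge (hi : i + 1 < #T) : DescAt (T.sort (· ≥ ·)) i :=
  List.isChain_iff_forall_adjRel.1 T.sortedGT_sort.isChain i (by simpa using hi)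

theorem sort_ge_toFinset_eq (hnd : l.Nodup) (hl : ∀ i, i + 1 < l.length → DescAt l i) :
    l.toFinset.sort (· ≥ ·) = l :=
  (List.toFinset_sort (· ≥ ·) hnd).2
    ((List.isChain_iff_forall_adjRel.2 hl).sortedGT.pairwise.imp le_of_lt)

theorem isBBWord_drop_blockLen (hl : IsBBWord l) (hnd : l.Nodup) (hS : S ⊆ ddSet l)
    (hne : l ≠ []) : IsBBWord (l.drop (blockLen l S)) := by
  constructor
  · intro hd
    have hdesc := descAt_blockLen hl hnd hS (by simpa using hd)
    have := hdesc.lt_length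
    rw [List.adjRel_drop, List.adjRel_drop, List.length_drop, Nat.add_zero,
      show blockLen l S + (l.length - blockLen l S - 2) = l.length - 2 by omega]
    exact ⟨hdesc, (hl.1 hne).2⟩
  · intro i h
    exact hl.2 (blockLen l S + i) (by simpa only [List.adjRel_drop, Nat.add_assoc] using h)

theorem image_sub_subset_ddSet_drop (hS : S ⊆ ddSet l) (k : ℕ) :
    {i ∈ S | k ≤ i}.image (· - k) ⊆ ddSet (l.drop k) := by
  intro j hj
  obtain ⟨i, hi, rfl⟩ := mem_image.1 hj
  rw [mem_filter] at hi
  rw [mem_ddSet, List.adjRel_drop, List.adjRel_drop, ← Nat.add_assoc, Nat.add_sub_cancel' hi.2]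
  exact mem_ddSet.1 (hS hi.1)

theorem descAt_sort_ge_append (hi : i + 1 < #T) : DescAt (T.sort (· ≥ ·) ++ l) i :=
  (List.adjRel_append_left (by simpa using hi)).2 (descAt_sort_ge hi)

theorem isBBWord_sort_ge_append (hT : 2 ≤ #T) (hl : IsBBWord l) :
    IsBBWord (T.sort (· ≥ ·) ++ l) := by
  have hc : (T.sort (· ≥ ·)).length = #T := Finset.length_sort _
  refine ⟨fun _ => ⟨descAt_sort_ge_append (by omega), ?_⟩, fun i ⟨hi, hi1⟩ => ?_⟩
  · rcases eq_or_ne l [] with rfl | hne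
    · simpa [hc] using descAt_sort_ge_append (T := T) (l := []) (i := #T - 2) (by omega)
    · have := (hl.1 hne).1.lt_length
      rw [List.adjRel_append_right (by simp [hc]; omega), List.length_append, hc,
        show #T + l.length - 2 - #T = l.length - 2 by omega]
      exact (hl.1 hne).2
  · by_cases h : i + 1 < #T
    · exact not_ascAt_of_descAt (descAt_sort_ge_append h) hi
    rw [List.adjRel_append_right (by omega), hc] at hi1
    obtain h' | h' := (not_lt.1 h).eq_or_lt
    · rw [← h', Nat.sub_self] at hi1
      exact not_ascAt_of_descAt
        (hl.1 (List.ne_nil_of_length_pos (by have := hi1.lt_length; omega))).1 hi1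
    · rw [List.adjRel_append_right (by omega), hc] at hi
      exact hl.2 (i - #T) ⟨hi, by rwa [Nat.sub_add_comm (by omega)] at hi1⟩

-- The junction is marked exactly when it is a descent, so that the first block ends there.
noncomputable def joinMarks (T : Finset ℕ) (t : ℕ) (l : List ℕ) (S : Finset ℕ) : Finset ℕ :=
  range t ∪ ({#T - 1} : Finset ℕ).filter (DescAt (T.sort (· ≥ ·) ++ l)) ∪ S.image (· + #T)

theorem mem_joinMarks : i ∈ joinMarks T t l S ↔
    i < t ∨ (i = #T - 1 ∧ DescAt (T.sort (· ≥ ·) ++ l) i) ∨ ∃ j ∈ S, j + #T = i := by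
  simp [joinMarks]

theorem joinMarks_subset_ddSet (ht : t < #T - 1) (hl : IsBBWord l) (hS : S ⊆ ddSet l) :
    joinMarks T t l S ⊆ ddSet (T.sort (· ≥ ·) ++ l) := by
  have hc : (T.sort (· ≥ ·)).length = #T := Finset.length_sort _
  intro i hi
  rcases mem_joinMarks.1 hi with hi | ⟨rfl, hdesc⟩ | ⟨j, hj, rfl⟩
  · exact mem_ddSet.2 ⟨descAt_sort_ge_append (by omega), descAt_sort_ge_append (by omega)⟩
  · have := hdesc.lt_length
    rw [List.length_append, hc] at this
    refine mem_ddSet.2 ⟨hdesc, ?_⟩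
    rw [List.adjRel_append_right (by omega), hc, show #T - 1 + 1 - #T = 0 by omega]
    exact (hl.1 (List.ne_nil_of_length_pos (by omega))).1
  · rw [mem_ddSet, List.adjRel_append_right (by omega), List.adjRel_append_right (by omega), hc,
      Nat.add_sub_cancel, Nat.add_right_comm, Nat.add_sub_cancel]
    exact mem_ddSet.1 (hS hj)

/-- Cut off the first block of a marked word, remembering its letters, the number of marks in front
of its first unmarked position, and the rest of the word. -/
noncomputable def splitBlock : MarkedWord → Σ _ : Finset ℕ, ℕ × MarkedWord
  | ⟨l, S⟩ => ⟨(l.take (blockLen l S)).toFinset, firstGap S, l.drop (blockLen l S),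
      {i ∈ S | blockLen l S ≤ i}.image (· - blockLen l S)⟩

noncomputable def joinBlock : (Σ _ : Finset ℕ, ℕ × MarkedWord) → MarkedWord
  | ⟨T, t, l, S⟩ => ⟨T.sort (· ≥ ·) ++ l, joinMarks T t l S⟩

noncomputable def blockDecompositions (V : Finset ℕ) : Finset (Σ _ : Finset ℕ, ℕ × MarkedWord) :=
  {T ∈ V.powerset | 2 ≤ #T}.sigma fun T => range (#T - 1) ×ˢ markedWords (V \ T)

theorem splitBlock_mem (hV : V.Nonempty) {w : MarkedWord} (hw : w ∈ markedWords V) :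
    splitBlock w ∈ blockDecompositions V := by
  obtain ⟨l, S⟩ := w
  obtain ⟨⟨hlV, hl⟩, hS⟩ := mem_markedWords.1 hw
  have hnd : l.Nodup := Multiset.coe_nodup.1 (hlV ▸ V.nodup)
  have hne : l ≠ [] := by rintro rfl; exact hV.ne_empty (Finset.val_eq_zero.1 hlV.symm)
  simp only [splitBlock, blockDecompositions, mem_sigma, mem_filter, mem_powerset, mem_product,
    mem_range]
  set k := blockLen l S
  have hk2 : firstGap S + 2 ≤ k := firstGap_add_two_le_blockLen
  have hkl : k ≤ l.length := blockLen_le_length (hl.1 hne).1 hS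
  have htake : (l.take k).Nodup := (List.take_sublist _ _).nodup hnd
  rw [hnd.card_toFinset_take hkl]
  refine ⟨⟨fun x hx => ?_, by omega⟩, by omega,
    mem_markedWords.2 ⟨⟨?_, isBBWord_drop_blockLen hl hnd hS hne⟩,
      image_sub_subset_ddSet_drop hS _⟩⟩
  · rw [List.mem_toFinset] at hx
    rw [← Finset.mem_val, ← hlV, Multiset.mem_coe]
    exact List.mem_of_mem_take hx
  · have hsplit : (l : Multiset ℕ) = ↑(l.take k) + ↑(l.drop k) := by
      rw [Multiset.coe_add, List.take_append_drop]
    rw [sdiff_val, List.toFinset_val, htake.dedup, ← hlV, hsplit, add_tsub_cancel_left]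

theorem joinBlock_mem {b : Σ _ : Finset ℕ, ℕ × MarkedWord} (hb : b ∈ blockDecompositions V) :
    joinBlock b ∈ markedWords V := by
  obtain ⟨T, t, l, S⟩ := b
  simp only [blockDecompositions, mem_sigma, mem_filter, mem_powerset, mem_product,
    mem_range] at hb
  obtain ⟨⟨hTV, hT⟩, ht, hw⟩ := hb
  obtain ⟨⟨hlV, hl⟩, hS⟩ := mem_markedWords.1 hw
  refine mem_markedWords.2 ⟨⟨?_, isBBWord_sort_ge_append hT hl⟩, joinMarks_subset_ddSet ht hl hS⟩
  rw [← Multiset.coe_add, Finset.sort_eq, hlV, sdiff_val, add_tsub_cancel_of_le (val_le_iff.2 hTV)]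

theorem joinBlock_splitBlock (hV : V.Nonempty) {w : MarkedWord}
    (hw : w ∈ markedWords V) : joinBlock (splitBlock w) = w := by
  obtain ⟨l, S⟩ := w
  obtain ⟨⟨hlV, hl⟩, hS⟩ := mem_markedWords.1 hw
  have hnd : l.Nodup := Multiset.coe_nodup.1 (hlV ▸ V.nodup)
  have hne : l ≠ [] := by rintro rfl; exact hV.ne_empty (Finset.val_eq_zero.1 hlV.symm)
  have h0 := (hl.1 hne).1
  simp only [splitBlock, joinBlock]
  have hkl : blockLen l S ≤ l.length := blockLen_le_length h0 hS
  have htake : (l.take (blockLen l S)).Nodup := (List.take_sublist _ _).nodup hnd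
  have hsort : (l.take (blockLen l S)).toFinset.sort (· ≥ ·) = l.take (blockLen l S) :=
    sort_ge_toFinset_eq htake fun i hi => by
      simp only [List.length_take, min_eq_left hkl] at hi
      exact (List.adjRel_take hi).2 (descAt_of_lt_blockLen h0 hS hi)
  simp only [hsort, List.take_append_drop, Sigma.mk.injEq, heq_eq_eq, true_and]
  ext i
  simp only [mem_joinMarks, hsort, hnd.card_toFinset_take hkl, List.take_append_drop, mem_image,
    mem_filter]
  constructor
  · rintro (h | ⟨rfl, h⟩ | ⟨_, ⟨j, ⟨hj, hkj⟩, rfl⟩, rfl⟩)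
    · exact mem_of_lt_firstGap h
    · exact (blockLen_sub_one_mem_iff hS).2 h
    · rwa [Nat.sub_add_cancel hkj]
  · intro hi
    rcases lt_firstGap_or_le_of_mem l hi with h | h
    · exact Or.inl h
    rcases h.eq_or_lt with h | h
    · subst h
      exact Or.inr (Or.inl ⟨rfl, (blockLen_sub_one_mem_iff hS).1 hi⟩)
    · exact Or.inr (Or.inr ⟨i - blockLen l S, ⟨i, ⟨hi, by omega⟩, rfl⟩, by omega⟩)

theorem splitBlock_joinBlock {b : Σ _ : Finset ℕ, ℕ × MarkedWord}
    (hb : b ∈ blockDecompositions V) : splitBlock (joinBlock b) = b := by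
  obtain ⟨T, t, l, S⟩ := b
  simp only [blockDecompositions, mem_sigma, mem_filter, mem_powerset, mem_product,
    mem_range] at hb
  obtain ⟨⟨-, hT⟩, ht, hw⟩ := hb
  have hc : (T.sort (· ≥ ·)).length = #T := Finset.length_sort _
  simp only [joinBlock, splitBlock]
  have hgap : firstGap (joinMarks T t l S) = t :=
    firstGap_eq (fun i hi => mem_joinMarks.2 (Or.inl hi)) fun h => by
      rcases mem_joinMarks.1 h with h | ⟨h, -⟩ | ⟨j, -, h⟩ <;> omega
  have hlen : blockLen (T.sort (· ≥ ·) ++ l) (joinMarks T t l S) = #T := by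
    rw [blockLen_eq (j := #T - 1) (by omega), Nat.sub_add_cancel (by omega)]
    · by_cases h : DescAt (T.sort (· ≥ ·) ++ l) (#T - 1)
      · exact Or.inr (mem_joinMarks.2 (Or.inr (Or.inl ⟨rfl, h⟩)))
      · exact Or.inl h
    · intro i hti hiT
      refine ⟨descAt_sort_ge_append (by omega), fun h => ?_⟩
      rcases mem_joinMarks.1 h with h | ⟨h, -⟩ | ⟨j, -, h⟩ <;> omega
  simp only [hgap, hlen, List.take_left' hc, List.drop_left' hc, Finset.sort_toFinset,
    Sigma.mk.injEq, heq_eq_eq, true_and, Prod.mk.injEq]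
  ext j
  simp only [mem_image, mem_filter, mem_joinMarks]
  constructor
  · rintro ⟨i, ⟨hi | ⟨rfl, -⟩ | ⟨j, hj, rfl⟩, hTi⟩, rfl⟩
    · omega
    · omega
    · rwa [Nat.add_sub_cancel]
  · exact fun hj => ⟨j + #T, ⟨Or.inr (Or.inr ⟨j, hj, rfl⟩), by omega⟩, Nat.add_sub_cancel _ _⟩

theorem card_markedWords_eq_sum (hV : V.Nonempty) :
    #(markedWords V) = ∑ T ∈ V.powerset, (#T - 1) * #(markedWords (V \ T)) := by
  calc #(markedWords V) = #(blockDecompositions V) :=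
        card_bij' (fun w _ => splitBlock w) (fun b _ => joinBlock b)
          (fun _ hw => splitBlock_mem hV hw) (fun _ hb => joinBlock_mem hb)
          (fun _ hw => joinBlock_splitBlock hV hw) (fun _ hb => splitBlock_joinBlock hb)
    _ = ∑ T ∈ V.powerset with 2 ≤ #T, (#T - 1) * #(markedWords (V \ T)) := by
        simp [blockDecompositions, card_sigma, card_product]
    _ = _ := sum_filter_of_ne fun T _ h => by
        by_contra h'
        exact h (by rw [Nat.sub_eq_zero_of_le (by omega), zero_mul])

theorem card_markedWords (V : Finset ℕ) : #(markedWords V) = numDerangements #V := by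
  induction hn : #V using Nat.strong_induction_on generalizing V with
  | _ n ih =>
  rcases V.eq_empty_or_nonempty with rfl | hV
  · simp [← hn, markedWords_empty]
  have hterm : ∀ T ∈ V.powerset,
      (#T - 1) * #(markedWords (V \ T)) = (#T - 1) * numDerangements (n - #T) := by
    intro T hT
    rcases T.eq_empty_or_nonempty with rfl | hT'
    · simp
    · have hTV := mem_powerset.1 hT
      have := hT'.card_pos
      have := card_le_card hTV
      rw [ih (n - #T) (by omega) _ (by rw [card_sdiff_of_subset hTV, hn])]
  rw [card_markedWords_eq_sum hV, sum_congr rfl hterm,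
    sum_powerset_apply_card (fun k => (k - 1) * numDerangements (n - k)), hn,
    numDerangements_eq_sum_choose_mul (by rintro rfl; exact hV.ne_empty (card_eq_zero.1 hn))]
  rfl

section Permutations

variable {n : ℕ} {π : Equiv.Perm (Fin n)}

def wordOf (π : Equiv.Perm (Fin n)) : List ℕ := List.ofFn fun i => (π i : ℕ)

@[simp]
theorem length_wordOf : (wordOf π).length = n := List.length_ofFn

theorem descAt_wordOf : DescAt (wordOf π) i ↔ Desc π i := List.adjRel_ofFn

theorem ascAt_wordOf : AscAt (wordOf π) i ↔ Asc π i := List.adjRel_ofFn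

theorem wordOf_injective : Function.Injective (wordOf (n := n)) := fun _ _ h =>
  Equiv.ext fun i => Fin.ext (congrFun (List.ofFn_injective h) i)

theorem coe_wordOf (π : Equiv.Perm (Fin n)) : (wordOf π : Multiset ℕ) = (range n).val := by
  refine (Multiset.Nodup.ext ?_ (range n).nodup).2 fun a => ?_
  · exact Multiset.coe_nodup.2 (List.nodup_ofFn.2 (Fin.val_injective.comp π.injective))
  · simp only [wordOf, Multiset.mem_coe, List.mem_ofFn, Finset.mem_val, mem_range]
    exact ⟨fun ⟨i, hi⟩ => hi ▸ (π i).2, fun ha => ⟨π.symm ⟨a, ha⟩, by simp⟩⟩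

theorem exists_wordOf_eq {l : List ℕ} (hl : (l : Multiset ℕ) = (range n).val) :
    ∃ π : Equiv.Perm (Fin n), wordOf π = l := by
  have hnd : l.Nodup := Multiset.coe_nodup.1 (hl ▸ (range n).nodup)
  have hlen : l.length = n := by simpa using congrArg Multiset.card hl
  have hlt : ∀ (i : ℕ) (hi : i < l.length), l[i] < n := fun i hi => by
    simpa [← Multiset.mem_coe, hl] using List.getElem_mem hi
  let f : Fin n → Fin n := fun i => ⟨l[i.1], hlt _ _⟩
  have hf : Function.Injective f := fun i j h =>
    Fin.ext (hnd.getElem_inj_iff.1 (congrArg Fin.val h))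
  refine ⟨Equiv.ofBijective f (Finite.injective_iff_bijective.1 hf), ?_⟩
  exact List.ext_getElem (by simp [hlen]) fun i _ _ => by simp [wordOf, f]

theorem isBBWord_wordOf (hn : n ≠ 0) :
    IsBBWord (wordOf π) ↔ NoDoubleAsc π ∧ Desc π 0 ∧ Desc π (n - 2) := by
  have hne : wordOf π ≠ [] := List.ne_nil_of_length_pos (by simp; omega)
  simp only [IsBBWord, NoDoubleAsc, descAt_wordOf, ascAt_wordOf, length_wordOf, ne_eq, hne,
    not_false_eq_true, forall_const]
  tauto

theorem card_ddSet_wordOf : #(ddSet (wordOf π)) = dd π := by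
  simp [ddSet, dd, descAt_wordOf]

end Permutations

theorem alphaBB_eq_card_markedWords {n : ℕ} (hn : n ≠ 0) :
    alphaBB n = #(markedWords (range n)) := by
  rw [markedWords, card_sigma, alphaBB]
  simp only [card_powerset]
  refine sum_bij (fun π _ => wordOf π) (fun π hπ => ?_) (fun _ _ _ _ h => wordOf_injective h)
    (fun l hl => ?_) (fun π _ => by rw [card_ddSet_wordOf])
  · simp only [mem_filter, mem_univ, true_and, Multiset.mem_toFinset,
      Multiset.mem_lists_iff] at hπ ⊢
    exact ⟨(coe_wordOf π).symm, (isBBWord_wordOf hn).2 hπ⟩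
  · simp only [mem_filter, Multiset.mem_toFinset, Multiset.mem_lists_iff] at hl
    obtain ⟨π, rfl⟩ := exists_wordOf_eq hl.1.symm
    exact ⟨π, by simpa using (isBBWord_wordOf hn).1 hl.2, rfl⟩

end AlphaBB

/-- For n ≥ 2, α_n(b,b) = ⌊n!/e + 1/2⌋, the nearest integer to n!/e. -/
theorem alphaBB_eq_nearest (n : ℕ) (hn : 2 ≤ n) :
    (alphaBB n : ℤ) = ⌊(n.factorial : ℝ) / Real.exp 1 + 1 / 2⌋ := by
  rw [AlphaBB.alphaBB_eq_card_markedWords (by omega), AlphaBB.card_markedWords, card_range,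
    numDerangements_eq_floor hn]
end

section
/- Let α_n = Σ 2^{dd(π)} over all permutations of [n] with no double ascents. Then for n ≥ 4, α_n equals the nearest integer to (e − 2 + 1/e) · n!. -/
open Finset
open scoped Classical

/-!
Write a permutation as its first value `p` followed by a permutation `σ` of the remaining values
(`consPerm p σ`). Its weight (`2 ^ dd`, or `0` when there is a double ascent) is that of `σ` times
a factor depending only on `p`, `σ 0` and on whether `σ` starts with a descent. So the total
weights `T j` (`firstWeight`) of the permutations starting with `j`, and `D j` (`firstDescWeight`)
of those among them starting with a descent, obey `T' j = S + ∑_{j' < j} T j'` and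
`D' j = ∑_{j' < j} (T j' + D j')` one size up, where `S = ∑_j D j` (`descWeight`).

Prefix sums shift the basis `j.choose k`, so `T` and `D` are binomial combinations whose
coefficients are the numbers `s m = m! - d_m` of permutations of `m` points with a fixed point.
The remaining identities, `S = s N` on `N` points and the value of `α = ∑_j T j`, are binomial
convolutions, i.e. identities between exponential generating functions, and follow from
`(1 - X) ∑ s m X^m / m! = 1 - e^{-X}`. The result is `α N = N! (∑_{u ≤ N} (1 + (-1)^u) / u! - 2)`,
which is within `2 (N + 2) / (N + 1)^2 < 1/2` of `(e - 2 + 1/e) N!` once `N ≥ 4`.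
-/

open Equiv Equiv.Perm PowerSeries
open scoped Nat

namespace Equiv.Perm

variable {n : ℕ}

noncomputable def consPerm (p : Fin (n + 1)) (σ : Perm (Fin n)) : Perm (Fin (n + 1)) :=
  Equiv.ofBijective (Fin.cons p (p.succAbove ∘ σ)) <| Finite.injective_iff_bijective.1 <|
    Fin.cons_injective_iff.2
      ⟨fun ⟨i, hi⟩ => Fin.succAbove_ne p (σ i) hi, p.succAbove_right_injective.comp σ.injective⟩

@[simp]
lemma consPerm_zero (p : Fin (n + 1)) (σ : Perm (Fin n)) : consPerm p σ 0 = p := by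
  simp [consPerm]

@[simp]
lemma consPerm_succ (p : Fin (n + 1)) (σ : Perm (Fin n)) (i : Fin n) :
    consPerm p σ i.succ = p.succAbove (σ i) := by
  simp [consPerm]

lemma consPerm_mk_succ (p : Fin (n + 1)) (σ : Perm (Fin n)) (i : ℕ) (h : i + 1 < n + 1) :
    consPerm p σ ⟨i + 1, h⟩ = p.succAbove (σ ⟨i, Nat.lt_of_succ_lt_succ h⟩) :=
  consPerm_succ p σ ⟨i, _⟩

lemma bijective_consPerm :
    Function.Bijective fun x : Fin (n + 1) × Perm (Fin n) => consPerm x.1 x.2 := by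
  refine (Fintype.bijective_iff_injective_and_card _).2 ⟨?_, ?_⟩
  · rintro ⟨p, σ⟩ ⟨q, τ⟩ h
    have hp : p = q := by simpa using congr($h 0)
    subst hp
    refine Prod.ext rfl (Equiv.ext fun i => p.succAbove_right_injective ?_)
    simpa using congr($h i.succ)
  · simp [Fintype.card_perm, Nat.factorial_succ]

lemma sum_perm_fin_succ {M : Type*} [AddCommMonoid M] (f : Perm (Fin (n + 1)) → M) :
    ∑ π, f π = ∑ p, ∑ σ, f (consPerm p σ) := by
  rw [← Fintype.sum_prod_type' (fun p σ => f (consPerm p σ)),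
    bijective_consPerm.sum_comp (g := f)]

section ConsPerm

variable (p : Fin (n + 1)) (σ : Perm (Fin n))

lemma desc_consPerm_succ (i : ℕ) : Desc (consPerm p σ) (i + 1) ↔ Desc σ i := by
  simp only [Desc, consPerm_mk_succ, Fin.succAbove_lt_succAbove_iff]
  exact ⟨fun ⟨h, hlt⟩ => ⟨by omega, hlt⟩, fun ⟨h, hlt⟩ => ⟨by omega, hlt⟩⟩

lemma asc_consPerm_succ (i : ℕ) : Asc (consPerm p σ) (i + 1) ↔ Asc σ i := by
  simp only [Asc, consPerm_mk_succ, Fin.succAbove_lt_succAbove_iff]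
  exact ⟨fun ⟨h, hlt⟩ => ⟨by omega, hlt⟩, fun ⟨h, hlt⟩ => ⟨by omega, hlt⟩⟩

lemma dd_consPerm :
    dd (consPerm p σ) = dd σ + if Desc (consPerm p σ) 0 ∧ Desc σ 0 then 1 else 0 := by
  simp only [dd, card_filter, sum_range_succ' _ n, desc_consPerm_succ]

lemma noDoubleAsc_consPerm :
    NoDoubleAsc (consPerm p σ) ↔ ¬(Asc (consPerm p σ) 0 ∧ Asc σ 0) ∧ NoDoubleAsc σ := by
  simp only [NoDoubleAsc, ← asc_consPerm_succ p σ]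
  exact ⟨fun h => ⟨h 0, fun i => h (i + 1)⟩, fun h i => i.casesOn h.1 fun i => h.2 i⟩

end ConsPerm

lemma desc_consPerm_zero (p : Fin (n + 2)) (σ : Perm (Fin (n + 1))) :
    Desc (consPerm p σ) 0 ↔ (σ 0 : ℕ) < p := by
  simp only [Desc, consPerm_mk_succ, Fin.zero_eta, consPerm_zero,
    Fin.succAbove_lt_iff_castSucc_lt, exists_prop_of_true (by omega : 0 + 1 < n + 2)]
  rfl

lemma asc_consPerm_zero (p : Fin (n + 2)) (σ : Perm (Fin (n + 1))) :
    Asc (consPerm p σ) 0 ↔ (p : ℕ) ≤ σ 0 := by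
  simp only [Asc, consPerm_mk_succ, Fin.zero_eta, consPerm_zero,
    Fin.lt_succAbove_iff_le_castSucc, exists_prop_of_true (by omega : 0 + 1 < n + 2)]
  rfl

lemma asc_zero_iff_not_desc_zero (π : Perm (Fin (n + 2))) : Asc π 0 ↔ ¬Desc π 0 := by
  have h : 0 + 1 < n + 2 := by omega
  have hne : π ⟨0, by omega⟩ ≠ π ⟨0 + 1, h⟩ := π.injective.ne (by simp)
  simp only [Asc, Desc, exists_prop_of_true h, not_lt]
  exact ⟨le_of_lt, fun hle => lt_of_le_of_ne hle hne⟩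

end Equiv.Perm

lemma sum_range_sum_ite_val_eq {α M : Type*} [Fintype α] [AddCommMonoid M] (v : α → ℕ)
    (g : α → M) (j : ℕ) :
    ∑ j' ∈ range j, ∑ a, (if v a = j' then g a else 0) = ∑ a, if v a < j then g a else 0 := by
  rw [sum_comm]
  simp

lemma sum_fin_ite_val_eq {N : ℕ} {M : Type*} [AddCommMonoid M] {j : ℕ} (hj : j < N)
    (F : Fin N → M) :
    ∑ p : Fin N, (if (p : ℕ) = j then F p else 0) = F ⟨j, hj⟩ := by
  simp [← Fin.ext_iff (b := ⟨j, hj⟩)]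

noncomputable def weight {n : ℕ} (π : Perm (Fin n)) : ℕ := if NoDoubleAsc π then 2 ^ dd π else 0

lemma alpha_eq_sum_weight (n : ℕ) : alpha n = ∑ π : Perm (Fin n), weight π :=
  sum_filter _ _

/-- The factor is `0` if prepending `p` creates a double ascent and `2` if it creates a double
descent. -/
lemma weight_consPerm {n : ℕ} (p : Fin (n + 3)) (σ : Perm (Fin (n + 2))) :
    weight (consPerm p σ) =
      ((if (σ 0 : ℕ) < p then 1 else 0) + if Desc σ 0 then 1 else 0) * weight σ := by
  simp only [weight, noDoubleAsc_consPerm, dd_consPerm, asc_zero_iff_not_desc_zero σ,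
    desc_consPerm_zero, asc_consPerm_zero]
  by_cases h1 : (σ 0 : ℕ) < p <;> by_cases h2 : Desc σ 0 <;> by_cases h3 : NoDoubleAsc σ <;>
    simp [h1, h2, h3, pow_succ, mul_comm]

noncomputable def descWeight (n : ℕ) : ℕ :=
  ∑ π : Perm (Fin (n + 1)), if Desc π 0 then weight π else 0

noncomputable def firstWeight (n j : ℕ) : ℕ :=
  ∑ π : Perm (Fin (n + 1)), if (π 0 : ℕ) = j then weight π else 0

noncomputable def firstDescWeight (n j : ℕ) : ℕ :=
  ∑ π : Perm (Fin (n + 1)), if (π 0 : ℕ) = j then (if Desc π 0 then weight π else 0) else 0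

lemma firstWeight_succ {n j : ℕ} (hj : j < n + 3) :
    firstWeight (n + 2) j = descWeight (n + 1) + ∑ j' ∈ range j, firstWeight (n + 1) j' := by
  simp only [firstWeight, descWeight, sum_range_sum_ite_val_eq, sum_perm_fin_succ (n := n + 2),
    consPerm_zero]
  rw [sum_comm]
  simp only [sum_fin_ite_val_eq hj, weight_consPerm, add_mul, sum_add_distrib, ite_mul, one_mul,
    zero_mul]
  exact add_comm _ _

lemma firstDescWeight_succ {n j : ℕ} (hj : j < n + 3) :
    firstDescWeight (n + 2) j =
      ∑ j' ∈ range j, (firstWeight (n + 1) j' + firstDescWeight (n + 1) j') := by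
  simp only [firstWeight, firstDescWeight, sum_add_distrib, sum_range_sum_ite_val_eq,
    sum_perm_fin_succ (n := n + 2), consPerm_zero]
  rw [sum_comm, ← sum_add_distrib]
  simp only [sum_fin_ite_val_eq hj]
  refine sum_congr rfl fun σ _ => ?_
  simp only [desc_consPerm_zero, weight_consPerm]
  split_ifs <;> simp [two_mul]

lemma descWeight_eq_sum (n : ℕ) : descWeight n = ∑ j ∈ range (n + 1), firstDescWeight n j := by
  simp only [descWeight, firstDescWeight, sum_range_sum_ite_val_eq, Fin.is_lt, if_true]

lemma alpha_succ_eq_sum (n : ℕ) : alpha (n + 1) = ∑ j ∈ range (n + 1), firstWeight n j := by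
  simp only [alpha_eq_sum_weight, firstWeight, sum_range_sum_ite_val_eq, Fin.is_lt, if_true]

lemma weight_fin_two (π : Perm (Fin 2)) : weight π = 1 := by
  have hdd : dd π = 0 := by
    simp only [dd, card_eq_zero, filter_eq_empty_iff]
    rintro i - ⟨-, h, -⟩
    omega
  have hnda : NoDoubleAsc π := by
    rintro i ⟨-, h, -⟩
    omega
  simp [weight, hdd, hnda]

lemma firstWeight_one {j : ℕ} (hj : j < 2) : firstWeight 1 j = 1 := by
  simp only [firstWeight, weight_fin_two, sum_perm_fin_succ (n := 1), consPerm_zero]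
  rw [sum_comm]
  simp only [sum_fin_ite_val_eq hj]
  simp

lemma firstDescWeight_one {j : ℕ} (hj : j < 2) : firstDescWeight 1 j = j := by
  simp only [firstDescWeight, weight_fin_two, sum_perm_fin_succ (n := 1), consPerm_zero]
  rw [sum_comm]
  simp only [sum_fin_ite_val_eq hj, desc_consPerm_zero]
  interval_cases j <;> simp

noncomputable def egf (f : ℕ → ℚ) : ℚ⟦X⟧ := PowerSeries.mk fun m => f m / m !

lemma factorial_mul_coeff_egf_mul (f g : ℕ → ℚ) (N : ℕ) :
    N ! * coeff N (egf f * egf g) = ∑ p ∈ antidiagonal N, N.choose p.1 * f p.1 * g p.2 := by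
  rw [coeff_mul, mul_sum]
  refine sum_congr rfl fun p hp => ?_
  obtain ⟨i, k⟩ := p
  obtain rfl : i + k = N := mem_antidiagonal.1 hp
  simp only [egf, coeff_mk]
  rw [Nat.cast_choose ℚ (Nat.le_add_right i k), Nat.add_sub_cancel_left]
  field_simp

noncomputable def numNonDerangements (m : ℕ) : ℚ := (m ! : ℚ) - numDerangements m

lemma one_sub_X_mul_egf_numNonDerangements :
    (1 - X) * egf numNonDerangements = 1 - evalNegHom (exp ℚ) := by
  ext (_ | m)
  · simp only [sub_mul, one_mul, map_sub, coeff_zero_X_mul, coeff_one, evalNegHom, coeff_rescale,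
      coeff_exp, egf, coeff_mk, numNonDerangements]
    simp
  · have hd : (numDerangements (m + 1) : ℚ) = (m + 1) * numDerangements m - (-1) ^ m := by
      exact_mod_cast numDerangements_succ m
    simp only [sub_mul, one_mul, map_sub, coeff_succ_X_mul, coeff_one, evalNegHom, coeff_rescale,
      coeff_exp, egf, coeff_mk, numNonDerangements, hd]
    simp [Nat.factorial_succ]
    field_simp
    ring

lemma egf_one : egf 1 = exp ℚ := by
  ext m
  simp [egf, coeff_exp]

lemma egf_pred : egf (fun i => (i : ℚ) - 1) = (X - 1) * exp ℚ := by
  ext (_ | m)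
  · simp [egf]
  · simp [egf, sub_mul, coeff_succ_X_mul, coeff_exp, Nat.factorial_succ]
    field_simp
    ring

lemma sum_antidiagonal_choose_pred_mul_numNonDerangements {N : ℕ} (hN : N ≠ 0) :
    ∑ p ∈ antidiagonal N, N.choose p.1 * ((p.1 : ℚ) - 1) * numNonDerangements p.2 = -1 := by
  have key : (X - 1) * exp ℚ * egf numNonDerangements = 1 - exp ℚ := by
    linear_combination
      (-exp ℚ) * one_sub_X_mul_egf_numNonDerangements + exp_mul_exp_neg_eq_one (A := ℚ)
  rw [← factorial_mul_coeff_egf_mul (fun i => (i : ℚ) - 1), egf_pred, key]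
  simp [coeff_one, coeff_exp, hN, Nat.factorial_ne_zero]

lemma sum_antidiagonal_choose_mul_numNonDerangements_sub (N : ℕ) :
    ∑ p ∈ antidiagonal N, N.choose p.1 * numNonDerangements p.2 - numNonDerangements N =
      N ! * (∑ u ∈ range (N + 1), (1 + (-1) ^ u) / (u ! : ℚ) - 2) := by
  have key : (exp ℚ - 1) * egf numNonDerangements =
      (exp ℚ + evalNegHom (exp ℚ) - 2) * PowerSeries.mk 1 := by
    linear_combination (exp ℚ - 1) * PowerSeries.mk 1 * one_sub_X_mul_egf_numNonDerangements -
      PowerSeries.mk 1 * exp_mul_exp_neg_eq_one (A := ℚ) -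
      (exp ℚ - 1) * egf numNonDerangements * mk_one_mul_one_sub_eq_one ℚ
  have hN : numNonDerangements N = N ! * coeff N (egf numNonDerangements) := by
    simp [egf]
    field_simp
  have hconv := factorial_mul_coeff_egf_mul 1 numNonDerangements N
  simp only [Pi.one_apply, mul_one] at hconv
  rw [← hconv, egf_one, hN, ← mul_sub, ← map_sub, ← sub_one_mul, key,
    coeff_mul, Nat.sum_antidiagonal_eq_sum_range_succ_mk]
  congr 1
  simp [coeff_exp, evalNegHom, coeff_rescale, sum_add_distrib, add_mul, ← map_ofNat C 2, coeff_C,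
    div_eq_mul_inv]

lemma sum_range_choose_eq_choose_succ (N k : ℕ) :
    ∑ j ∈ range N, j.choose k = N.choose (k + 1) := by
  induction N with
  | zero => simp
  | succ N ih => rw [sum_range_succ, ih, Nat.choose_succ_succ' N k, add_comm]

lemma sum_range_sum_antidiagonal_mul_choose (c : ℕ × ℕ → ℚ) (n N : ℕ) :
    ∑ j ∈ range N, ∑ p ∈ antidiagonal n, c p * j.choose p.1 =
      ∑ p ∈ antidiagonal n, c p * N.choose (p.1 + 1) := by
  rw [sum_comm]
  simp only [← mul_sum, ← sum_range_choose_eq_choose_succ, Nat.cast_sum]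

lemma descWeight_eq_numNonDerangements {n : ℕ}
    (h : ∀ j ≤ n, (firstDescWeight n j : ℚ) =
      ∑ p ∈ antidiagonal n, p.1 * numNonDerangements p.2 * j.choose p.1 + j.choose n) :
    (descWeight n : ℚ) = numNonDerangements (n + 1) := by
  have hid := sum_antidiagonal_choose_pred_mul_numNonDerangements n.succ_ne_zero
  rw [Nat.sum_antidiagonal_succ] at hid
  rw [descWeight_eq_sum, Nat.cast_sum,
    sum_congr rfl fun j hj => h j (Nat.lt_succ_iff.1 (mem_range.1 hj)), sum_add_distrib,
    sum_range_sum_antidiagonal_mul_choose, ← Nat.cast_sum, sum_range_choose_eq_choose_succ]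
  simp only [Nat.choose_zero_right, Nat.cast_one, Nat.cast_zero, zero_sub, one_mul, neg_one_mul,
    Nat.cast_add, add_sub_cancel_right, Nat.succ_eq_add_one] at hid
  have hcomm :
      ∑ p ∈ antidiagonal n, (p.1 : ℚ) * numNonDerangements p.2 * ((n + 1).choose (p.1 + 1) : ℚ) =
        ∑ p ∈ antidiagonal n, ((n + 1).choose (p.1 + 1) : ℚ) * p.1 * numNonDerangements p.2 :=
    sum_congr rfl fun p _ => by ring
  rw [Nat.choose_self, Nat.cast_one, hcomm]
  linarith

theorem firstWeight_firstDescWeight_eq {n : ℕ} (hn : 1 ≤ n) : ∀ j ≤ n,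
    (firstWeight n j : ℚ) = ∑ p ∈ antidiagonal n, numNonDerangements p.2 * j.choose p.1 ∧
    (firstDescWeight n j : ℚ) =
      ∑ p ∈ antidiagonal n, p.1 * numNonDerangements p.2 * j.choose p.1 + j.choose n := by
  induction n, hn using Nat.le_induction with
  | base =>
    intro j hj
    rw [firstWeight_one (by omega), firstDescWeight_one (by omega)]
    interval_cases j <;> simp [Nat.sum_antidiagonal_succ, numNonDerangements]
  | succ n hn ih =>
    obtain ⟨m, rfl⟩ : ∃ m, n = m + 1 := ⟨n - 1, by omega⟩
    have hdesc := descWeight_eq_numNonDerangements fun j hj => (ih j hj).2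
    intro j hj
    have hprev : ∀ j' ∈ range j, j' ≤ m + 1 := fun j' hj' => by simp at hj'; omega
    constructor
    · rw [firstWeight_succ (by omega), Nat.cast_add, Nat.cast_sum, hdesc,
        sum_congr rfl fun j' hj' => (ih j' (hprev j' hj')).1, sum_range_sum_antidiagonal_mul_choose,
        Nat.sum_antidiagonal_succ (n := m + 1)]
      simp
    · have hstep : ∀ j' ∈ range j,
          ((firstWeight (m + 1) j' + firstDescWeight (m + 1) j' : ℕ) : ℚ) =
            ∑ p ∈ antidiagonal (m + 1), ((p.1 : ℚ) + 1) * numNonDerangements p.2 * j'.choose p.1 +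
              (j'.choose (m + 1) : ℕ) := fun j' hj' => by
        rw [Nat.cast_add, (ih j' (hprev j' hj')).1, (ih j' (hprev j' hj')).2, ← add_assoc,
          ← sum_add_distrib]
        exact congr($(sum_congr rfl fun p _ => by ring) + _)
      rw [firstDescWeight_succ (by omega), Nat.cast_sum, sum_congr rfl hstep, sum_add_distrib,
        sum_range_sum_antidiagonal_mul_choose, ← Nat.cast_sum, sum_range_choose_eq_choose_succ,
        Nat.sum_antidiagonal_succ (n := m + 1)]
      simp

theorem cast_alpha_eq {N : ℕ} (hN : 2 ≤ N) :
    (alpha N : ℚ) = N ! * (∑ u ∈ range (N + 1), (1 + (-1) ^ u) / (u ! : ℚ) - 2) := by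
  obtain ⟨n, rfl⟩ : ∃ n, N = n + 1 := ⟨N - 1, by omega⟩
  rw [← sum_antidiagonal_choose_mul_numNonDerangements_sub, Nat.sum_antidiagonal_succ,
    alpha_succ_eq_sum, Nat.cast_sum,
    sum_congr rfl fun j hj =>
      (firstWeight_firstDescWeight_eq (by omega) j (Nat.lt_succ_iff.1 (mem_range.1 hj))).1,
    sum_range_sum_antidiagonal_mul_choose]
  simp [mul_comm]

lemma factorial_mul_abs_exp_sub_sum_le {x : ℝ} (hx : |x| ≤ 1) (N : ℕ) :
    N ! * |Real.exp x - ∑ u ∈ range (N + 1), x ^ u / u !| ≤ (N + 2) / (N + 1) ^ 2 := by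
  have hbound := Real.exp_bound hx (n := N + 1) N.succ_pos
  have hpow : |x| ^ (N + 1) ≤ 1 := pow_le_one₀ (abs_nonneg x) hx
  have hfac : ((N + 1) ! : ℝ) = (N + 1) * N ! := by push_cast [Nat.factorial_succ]; ring
  calc (N ! : ℝ) * |Real.exp x - ∑ u ∈ range (N + 1), x ^ u / u !|
      ≤ N ! * ((N + 1).succ / ((N + 1) ! * (N + 1 : ℕ))) := by
        gcongr
        exact hbound.trans (mul_le_of_le_one_left (by positivity) hpow)
    _ = (N + 2) / (N + 1) ^ 2 := by
        rw [hfac]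
        push_cast
        field_simp
        ring

lemma abs_alpha_sub_lt {N : ℕ} (hN : 4 ≤ N) :
    |(alpha N : ℝ) - (Real.exp 1 - 2 + 1 / Real.exp 1) * N !| < 1 / 2 := by
  have hα : (alpha N : ℝ) = N ! * (∑ u ∈ range (N + 1), (1 + (-1) ^ u) / (u ! : ℝ) - 2) := by
    exact_mod_cast congrArg (Rat.cast : ℚ → ℝ) (cast_alpha_eq (by omega : 2 ≤ N))
  have hpos := factorial_mul_abs_exp_sub_sum_le (x := 1) (by norm_num) N
  have hneg := factorial_mul_abs_exp_sub_sum_le (x := -1) (by norm_num) N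
  have hsplit : (Real.exp 1 - 2 + 1 / Real.exp 1) * (N ! : ℝ) - alpha N =
      N ! * (Real.exp 1 - ∑ u ∈ range (N + 1), (1 : ℝ) ^ u / u !) +
        N ! * (Real.exp (-1) - ∑ u ∈ range (N + 1), (-1 : ℝ) ^ u / u !) := by
    rw [hα, Real.exp_neg, one_div]
    simp only [one_pow, add_div, sum_add_distrib]
    ring
  have hN' : (4 : ℝ) ≤ N := by exact_mod_cast hN
  rw [abs_sub_comm, hsplit]
  calc _ ≤ _ := abs_add_le _ _
    _ = N ! * |Real.exp 1 - ∑ u ∈ range (N + 1), (1 : ℝ) ^ u / u !| +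
        N ! * |Real.exp (-1) - ∑ u ∈ range (N + 1), (-1 : ℝ) ^ u / u !| := by
        rw [abs_mul, abs_mul, Nat.abs_cast]
    _ ≤ (N + 2) / (N + 1) ^ 2 + (N + 2) / (N + 1) ^ 2 := add_le_add hpos hneg
    _ < 1 / 2 := by
        rw [← two_mul, mul_div_assoc', div_lt_div_iff₀ (by positivity) (by positivity)]
        nlinarith

lemma round_eq_of_abs_sub_lt_half {x : ℝ} {m : ℤ} (h : |(m : ℝ) - x| < 1 / 2) :
    round x = m := by
  rw [round_eq_iff]
  constructor <;> linarith [abs_lt.1 h]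

/-- For n ≥ 4, α_n is the nearest integer to (e − 2 + 1/e) · n!. -/
theorem alpha_eq_nearest (n : ℕ) (hn : 4 ≤ n) :
    (alpha n : ℤ)
      = round ((Real.exp 1 - 2 + 1 / Real.exp 1) * n.factorial) := by
  refine (round_eq_of_abs_sub_lt_half ?_).symm
  rw [Int.cast_natCast]
  exact abs_alpha_sub_lt hn
end
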